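/- arXiv:1806.03844 — 6 statements merged into one kernel-verified Lean document; each statement's English description precedes it below -/
import Mathlib

section
/- Expansion in one-sided factorial moments: if F is a probability distribution on the integers with ν_{s+1}^+(F) + ν_{s+1}^-(F) < ∞, then F = δ_0 + ∑_{m=1}^s (ν_m^+(F)/m!)(δ_1−δ_0)^m + ∑_{m=1}^s (ν_m^-(F)/m!)(δ_{−1}−δ_0)^m + R, where the remainder R is a signed measure with total variation norm ‖R‖ ≤ (ν_{s+1}^+(F)+ν_{s+1}^-(F))/(s+1)! · ‖(δ_1−δ_0)^{s+1}‖. -/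
/-- Total variation norm of a finite signed measure on ℤ. -/
noncomputable def tvNorm (M : ℤ → ℝ) : ℝ := ∑' k, |M k|

/-- Convolution of signed measures on ℤ. -/
noncomputable def convZ (M V : ℤ → ℝ) : ℤ → ℝ := fun k => ∑' j, M j * V (k - j)

/-- Dirac measure at `a ∈ ℤ`. -/
def diracZ (a : ℤ) : ℤ → ℝ := fun k => if k = a then 1 else 0

/-- Convolution power. -/
noncomputable def convPow (M : ℤ → ℝ) : ℕ → ℤ → ℝ
  | 0 => diracZ 0
  | n + 1 => convZ (convPow M n) M

/-- Right-hand factorial moment `ν_k⁺(F) = ∑_{m≥k} m(m−1)⋯(m−k+1) F{m}`. -/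
noncomputable def nuPlus (F : ℤ → ℝ) (k : ℕ) : ℝ :=
  ∑' m : ℕ, (m.descFactorial k : ℝ) * F (m : ℤ)

/-- Left-hand factorial moment `ν_k⁻(F) = ∑_{m≥k} m(m−1)⋯(m−k+1) F{−m}`. -/
noncomputable def nuMinus (F : ℤ → ℝ) (k : ℕ) : ℝ :=
  ∑' m : ℕ, (m.descFactorial k : ℝ) * F (-(m : ℤ))

/-!
In the group algebra `ℝ[ℤ]` write `δ₁ = 1 + U` with `U = δ₁ - δ₀`. The binomial formula with
remainder gives `δₙ = δ₁ⁿ = ∑_{m ≤ s} C(n, m) Uᵐ + U^{s+1} Wₙ`, where `W₀ = 0` and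
`W_{j+1} = δ₁ Wⱼ + C(j, s)`. Convolution with `δ₁` is an isometry, so by Pascal's rule
`‖U^{s+1} Wₙ‖ ≤ C(n, s+1) ‖U^{s+1}‖`. Averaging over `n` against `F{n}` turns `C(n, m)` into
`ν_m⁺/m!` and bounds the remainder by `ν_{s+1}⁺/(s+1)! ‖U^{s+1}‖`. The negative half-line is the
same with `δ₋₁`, and `(δ₋₁ - δ₀)^{s+1} = (-δ₋₁)^{s+1} U^{s+1}` has the same norm as `U^{s+1}`.
-/

open Finset
open scoped AddMonoidAlgebra

section TotalVariation

lemma tvNorm_nonneg (f : ℤ → ℝ) : 0 ≤ tvNorm f := tsum_nonneg fun _ => abs_nonneg _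

lemma tvNorm_neg (f : ℤ → ℝ) : tvNorm (-f) = tvNorm f := by
  simp only [tvNorm, Pi.neg_apply, abs_neg]

lemma tvNorm_smul (c : ℝ) (f : ℤ → ℝ) : tvNorm (c • f) = |c| * tvNorm f := by
  simp only [tvNorm, Pi.smul_apply, smul_eq_mul, abs_mul, tsum_mul_left]

lemma tvNorm_comp_sub (f : ℤ → ℝ) (a : ℤ) : tvNorm (fun k => f (k - a)) = tvNorm f :=
  (Equiv.subRight a).tsum_eq fun k => |f k|

lemma tvNorm_add_le {f g : ℤ → ℝ} (hf : Summable fun k => |f k|)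
    (hg : Summable fun k => |g k|) : tvNorm (f + g) ≤ tvNorm f + tvNorm g := by
  have hfg : Summable fun k => |(f + g) k| :=
    (hf.add hg).of_nonneg_of_le (fun _ => abs_nonneg _) fun k => abs_add_le _ _
  rw [tvNorm, tvNorm, tvNorm, ← hf.tsum_add hg]
  exact hfg.tsum_le_tsum (fun k => abs_add_le _ _) (hf.add hg)

section Superposition

variable {ι : Type*} {g : ι → ℤ → ℝ}

lemma summable_abs_uncurry (hg : ∀ i, Summable fun k => |g i k|)
    (hsum : Summable fun i => tvNorm (g i)) : Summable fun p : ι × ℤ => |g p.1 p.2| :=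
  (summable_prod_of_nonneg fun _ => abs_nonneg _).2 ⟨hg, hsum⟩

lemma summable_apply_of_summable_tvNorm (hg : ∀ i, Summable fun k => |g i k|)
    (hsum : Summable fun i => tvNorm (g i)) (k : ℤ) : Summable fun i => g i k := by
  have hinj : Function.Injective fun i : ι => (i, k) := fun _ _ h => (Prod.ext_iff.1 h).1
  exact ((summable_abs_uncurry hg hsum).comp_injective hinj).of_abs

lemma abs_tsum_apply_le (hg : ∀ i, Summable fun k => |g i k|)
    (hsum : Summable fun i => tvNorm (g i)) (k : ℤ) : |∑' i, g i k| ≤ ∑' i, |g i k| := by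
  simpa only [Real.norm_eq_abs] using
    norm_tsum_le_tsum_norm (summable_apply_of_summable_tvNorm hg hsum k).norm

lemma summable_abs_tsum_apply (hg : ∀ i, Summable fun k => |g i k|)
    (hsum : Summable fun i => tvNorm (g i)) : Summable fun k => |∑' i, g i k| :=
  (summable_abs_uncurry hg hsum).prod_symm.prod.of_nonneg_of_le (fun _ => abs_nonneg _)
    (abs_tsum_apply_le hg hsum)

lemma tvNorm_tsum_le (hg : ∀ i, Summable fun k => |g i k|)
    (hsum : Summable fun i => tvNorm (g i)) :
    tvNorm (fun k => ∑' i, g i k) ≤ ∑' i, tvNorm (g i) :=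
  calc tvNorm (fun k => ∑' i, g i k) ≤ ∑' k, ∑' i, |g i k| :=
        (summable_abs_tsum_apply hg hsum).tsum_le_tsum (abs_tsum_apply_le hg hsum)
          (summable_abs_uncurry hg hsum).prod_symm.prod
    _ = ∑' i, tvNorm (g i) :=
        Summable.tsum_comm (f := fun i k => |g i k|) (summable_abs_uncurry hg hsum)

end Superposition

end TotalVariation

section GroupAlgebra

open AddMonoidAlgebra

lemma diracZ_eq_coeff_single (a : ℤ) : diracZ a = ⇑(single a 1 : ℝ[ℤ]).coeff := by
  funext k
  simp [diracZ, eq_comm]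

lemma convZ_coeff_mul (x y : ℝ[ℤ]) : convZ x.coeff y.coeff = (x * y).coeff := by
  funext k
  rw [convZ, tsum_eq_sum (s := x.coeff.support) fun j hj => by
    simp [Finsupp.notMem_support_iff.mp hj]]
  conv_rhs => rw [← x.sum_coeff_single]
  rw [Finsupp.sum_mul, coeff_finsuppSum, Finsupp.sum_apply, Finsupp.sum]
  exact sum_congr rfl fun j _ => by rw [coeff_single_mul_apply, neg_add_eq_sub]

lemma convPow_coeff (x : ℝ[ℤ]) (n : ℕ) : convPow x.coeff n = (x ^ n).coeff := by
  induction n with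
  | zero => rw [convPow, pow_zero, diracZ_eq_coeff_single, one_def]
  | succ n ih => rw [convPow, ih, convZ_coeff_mul, pow_succ]

lemma convPow_diracZ_sub_diracZ (a : ℤ) (n : ℕ) :
    convPow (diracZ a - diracZ 0) n = ((single a 1 - 1 : ℝ[ℤ]) ^ n).coeff := by
  rw [← convPow_coeff, coeff_sub, one_def, Finsupp.coe_sub, ← diracZ_eq_coeff_single,
    ← diracZ_eq_coeff_single]

lemma summable_abs_coeff (x : ℝ[ℤ]) : Summable fun k => |x.coeff k| :=
  summable_of_ne_finset_zero (s := x.coeff.support) fun k hk => by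
    simp [Finsupp.notMem_support_iff.mp hk]

lemma tvNorm_coeff_add_le (x y : ℝ[ℤ]) : tvNorm (x + y).coeff ≤ tvNorm x.coeff + tvNorm y.coeff :=
  tvNorm_add_le (summable_abs_coeff x) (summable_abs_coeff y)

lemma tvNorm_coeff_smul (c : ℝ) (x : ℝ[ℤ]) : tvNorm (c • x).coeff = |c| * tvNorm x.coeff :=
  tvNorm_smul c x.coeff

lemma tvNorm_coeff_single_one_mul (a : ℤ) (x : ℝ[ℤ]) :
    tvNorm (single a 1 * x).coeff = tvNorm x.coeff := by
  rw [← tvNorm_comp_sub x.coeff a]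
  congr 1
  funext k
  rw [coeff_single_mul_apply, one_mul, neg_add_eq_sub]

lemma tvNorm_coeff_pow_single_neg_sub_one (a : ℤ) (n : ℕ) :
    tvNorm ((single (-a) 1 - 1 : ℝ[ℤ]) ^ n).coeff = tvNorm ((single a 1 - 1 : ℝ[ℤ]) ^ n).coeff := by
  have hfactor : (single (-a) 1 - 1 : ℝ[ℤ]) = -(single (-a) 1 * (single a 1 - 1)) := by
    rw [mul_sub, single_mul_single, neg_add_cancel, mul_one, mul_one, one_def, neg_sub]
  rw [hfactor, neg_pow, mul_pow, single_pow, one_pow, ← mul_assoc, mul_comm _ (single _ _),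
    mul_assoc, tvNorm_coeff_single_one_mul]
  rcases neg_one_pow_eq_or ℝ[ℤ] n with h | h <;> simp [h, coeff_neg, tvNorm_neg]

end GroupAlgebra

section BinomialRemainder

variable {R : Type*} [CommSemiring R]

def powRemainder (x : R) (s : ℕ) : ℕ → R
  | 0 => 0
  | j + 1 => x * powRemainder x s j + j.choose s

lemma one_add_mul_sum_range_choose (y : R) (j s : ℕ) :
    (1 + y) * ∑ m ∈ range (s + 1), (j.choose m : R) * y ^ m
      = ∑ m ∈ range (s + 1), ((j + 1).choose m : R) * y ^ m + j.choose s * y ^ (s + 1) := by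
  induction s with
  | zero => simp [add_comm]
  | succ s ih =>
    rw [sum_range_succ, mul_add, ih, sum_range_succ _ (s + 1), Nat.choose_succ_succ']
    push_cast
    ring

lemma one_add_pow_eq_sum_add_powRemainder (y : R) (s j : ℕ) :
    (1 + y) ^ j = ∑ m ∈ range (s + 1), (j.choose m : R) * y ^ m
      + y ^ (s + 1) * powRemainder (1 + y) s j := by
  induction j with
  | zero => simp [powRemainder, sum_range_succ']
  | succ j ih =>
    rw [pow_succ', ih, mul_add, one_add_mul_sum_range_choose, powRemainder]
    ring

end BinomialRemainder

lemma Nat.descFactorial_le_descFactorial {n m k : ℕ} (hmk : m ≤ k) (hkn : k ≤ n) :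
    n.descFactorial m ≤ n.descFactorial k := by
  rw [← Nat.descFactorial_mul_descFactorial hmk]
  exact Nat.le_mul_of_pos_left _ (Nat.descFactorial_pos.2 (by omega))

lemma Finset.sum_range_succ_eq_add_sum_Icc {M : Type*} [AddCommMonoid M] (f : ℕ → M) (s : ℕ) :
    ∑ m ∈ range (s + 1), f m = f 0 + ∑ m ∈ Icc 1 s, f m := by
  rw [Nat.range_succ_eq_Icc_zero, ← insert_Icc_add_one_left_eq_Icc (Nat.zero_le s),
    sum_insert (by simp), zero_add]

section FactorialMoments

open Nat

noncomputable def factorialMoment (G : ℕ → ℝ) (k : ℕ) : ℝ := ∑' n : ℕ, (n.descFactorial k : ℝ) * G n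

lemma summable_choose_mul_of_le {G : ℕ → ℝ} (hG0 : ∀ n, 0 ≤ G n) {k m : ℕ} (hmk : m ≤ k)
    (hG : Summable fun n => (n.descFactorial k : ℝ) * G n) :
    Summable fun n => (n.choose m : ℝ) * G n :=
  hG.of_norm_bounded_eventually_nat <| Filter.eventually_atTop.2 ⟨k, fun n hkn => by
    rw [Real.norm_of_nonneg (mul_nonneg (Nat.cast_nonneg _) (hG0 n))]
    exact mul_le_mul_of_nonneg_right (mod_cast (choose_le_descFactorial n m).trans
      (descFactorial_le_descFactorial hmk hkn)) (hG0 n)⟩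

lemma tsum_choose_mul (G : ℕ → ℝ) (m : ℕ) :
    ∑' n, (n.choose m : ℝ) * G n = factorialMoment G m / m ! := by
  rw [factorialMoment, eq_div_iff (by positivity), ← tsum_mul_right]
  congr 1 with n
  rw [descFactorial_eq_factorial_mul_choose]
  push_cast
  ring

end FactorialMoments

lemma tsum_nat_add_tsum_nat_neg {E : Type*} [NormedAddCommGroup E] [CompleteSpace E]
    {f : ℤ → E} (hf : Summable f) : ∑' n : ℕ, f n + ∑' n : ℕ, f (-n) = ∑' k, f k + f 0 := by
  have hnat : Summable fun n : ℕ => f n := hf.comp_injective Nat.cast_injective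
  have hneg : Summable fun n : ℕ => f (-n) :=
    hf.comp_injective (neg_injective.comp Nat.cast_injective)
  rw [← hnat.tsum_add hneg]
  exact tsum_nat_add_neg hf

noncomputable def diracMixture (G : ℕ → ℝ) (a : ℤ) : ℤ → ℝ :=
  fun k => ∑' n : ℕ, G n * diracZ (n • a) k

lemma eq_diracMixture_add_diracMixture (F : ℤ → ℝ) :
    F = diracMixture (fun n => F n) 1 + diracMixture (fun n => F (-n)) (-1) - F 0 • diracZ 0 := by
  funext k
  have hf : Summable fun j => F j * diracZ j k :=
    summable_of_ne_finset_zero (s := {k}) fun j hj => by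
      simp [diracZ, Ne.symm (Finset.notMem_singleton.1 hj)]
  have hsplit := tsum_nat_add_tsum_nat_neg hf
  rw [tsum_eq_single k fun j hj => by simp [diracZ, Ne.symm hj]] at hsplit
  simp only [diracMixture, Pi.add_apply, Pi.sub_apply, Pi.smul_apply, smul_eq_mul, nsmul_eq_mul,
    mul_one, mul_neg]
  simp only [diracZ, ↓reduceIte, mul_one] at hsplit ⊢
  linarith

section OneSided

open AddMonoidAlgebra Nat

lemma tvNorm_coeff_mul_powRemainder_le (a : ℤ) (u : ℝ[ℤ]) (s j : ℕ) :
    tvNorm (u * powRemainder (single a 1) s j).coeff ≤ j.choose (s + 1) * tvNorm u.coeff := by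
  induction j with
  | zero => simp [powRemainder, tvNorm]
  | succ j ih =>
    have hsplit : u * powRemainder (single a 1) s (j + 1)
        = single a 1 * (u * powRemainder (single a 1) s j) + (j.choose s : ℝ) • u := by
      rw [powRemainder, Nat.cast_smul_eq_nsmul, nsmul_eq_mul]
      ring
    calc tvNorm (u * powRemainder (single a 1) s (j + 1)).coeff
        ≤ tvNorm (single a 1 * (u * powRemainder (single a 1) s j)).coeff
          + tvNorm ((j.choose s : ℝ) • u).coeff := by
          rw [hsplit]
          exact tvNorm_coeff_add_le _ _
      _ = tvNorm (u * powRemainder (single a 1) s j).coeff + j.choose s * tvNorm u.coeff := by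
          rw [tvNorm_coeff_single_one_mul, tvNorm_coeff_smul, Nat.abs_cast]
      _ ≤ (j + 1).choose (s + 1) * tvNorm u.coeff := by
          rw [Nat.choose_succ_succ', Nat.cast_add, add_mul]
          linarith

lemma single_nsmul_eq_sum_add_powRemainder (a : ℤ) (s n : ℕ) :
    (single (n • a) 1 : ℝ[ℤ]) = ∑ m ∈ range (s + 1), (n.choose m : ℝ) • (single a 1 - 1) ^ m
      + (single a 1 - 1) ^ (s + 1) * powRemainder (single a 1) s n := by
  have h := one_add_pow_eq_sum_add_powRemainder (single a 1 - 1 : ℝ[ℤ]) s n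
  rw [add_sub_cancel, single_pow, one_pow] at h
  simpa only [Nat.cast_smul_eq_nsmul, nsmul_eq_mul] using h

theorem exists_diracMixture_expansion (a : ℤ) (G : ℕ → ℝ) (s : ℕ) (hG0 : ∀ n, 0 ≤ G n)
    (hG : Summable fun n => (n.descFactorial (s + 1) : ℝ) * G n) :
    ∃ R : ℤ → ℝ, (Summable fun k => |R k|) ∧
      tvNorm R ≤ factorialMoment G (s + 1) / (s + 1)!
        * tvNorm (convPow (diracZ a - diracZ 0) (s + 1)) ∧
      diracMixture G a = (∑' n, G n) • diracZ 0
        + ∑ m ∈ Icc 1 s, (factorialMoment G m / m !) • convPow (diracZ a - diracZ 0) m + R := by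
  set U : ℝ[ℤ] := single a 1 - 1
  set T := tvNorm (U ^ (s + 1)).coeff
  set r : ℕ → ℤ → ℝ := fun n => (G n • (U ^ (s + 1) * powRemainder (single a 1) s n)).coeff
  have hr : ∀ n, Summable fun k => |r n k| := fun n => summable_abs_coeff _
  have hr_le : ∀ n, tvNorm (r n) ≤ (n.choose (s + 1) : ℝ) * G n * T := fun n => by
    rw [tvNorm_coeff_smul, abs_of_nonneg (hG0 n), mul_comm _ (G n), mul_assoc]
    exact mul_le_mul_of_nonneg_left (tvNorm_coeff_mul_powRemainder_le a _ s n) (hG0 n)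
  have hchoose : ∀ m ≤ s + 1, Summable fun n => (n.choose m : ℝ) * G n :=
    fun m hm => summable_choose_mul_of_le hG0 hm hG
  have hr_sum : Summable fun n => tvNorm (r n) :=
    ((hchoose _ le_rfl).mul_right T).of_nonneg_of_le (fun n => tvNorm_nonneg _) hr_le
  refine ⟨fun k => ∑' n, r n k, summable_abs_tsum_apply hr hr_sum, ?_, ?_⟩
  · calc tvNorm (fun k => ∑' n, r n k) ≤ ∑' n, tvNorm (r n) := tvNorm_tsum_le hr hr_sum
      _ ≤ ∑' n, (n.choose (s + 1) : ℝ) * G n * T :=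
          hr_sum.tsum_le_tsum hr_le ((hchoose _ le_rfl).mul_right T)
      _ = _ := by rw [tsum_mul_right, tsum_choose_mul, convPow_diracZ_sub_diracZ]
  · funext k
    have hpoint : ∀ n, G n * diracZ (n • a) k
        = ∑ m ∈ range (s + 1), (n.choose m : ℝ) * G n * (U ^ m).coeff k + r n k := fun n => by
      rw [diracZ_eq_coeff_single, single_nsmul_eq_sum_add_powRemainder a s n]
      simp only [r, coeff_add, coeff_sum, coeff_smul, Finsupp.add_apply, Finsupp.coe_finsetSum,
        Finset.sum_apply, Finsupp.smul_apply, smul_eq_mul, mul_add, Finset.mul_sum]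
      congr 1
      exact sum_congr rfl fun m _ => by ring
    have hterm : ∀ m ∈ range (s + 1), Summable fun n => (n.choose m : ℝ) * G n * (U ^ m).coeff k :=
      fun m hm => (hchoose m (Finset.mem_range.1 hm).le).mul_right _
    calc diracMixture G a k
        = ∑' n, (∑ m ∈ range (s + 1), (n.choose m : ℝ) * G n * (U ^ m).coeff k + r n k) :=
          tsum_congr hpoint
      _ = ∑ m ∈ range (s + 1), (factorialMoment G m / m !) * (U ^ m).coeff k
            + ∑' n, r n k := by
          rw [(summable_sum hterm).tsum_add (summable_apply_of_summable_tvNorm hr hr_sum k),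
            Summable.tsum_finsetSum hterm]
          simp only [tsum_mul_right, tsum_choose_mul]
      _ = _ := by
          rw [Finset.sum_range_succ_eq_add_sum_Icc, pow_zero, one_def, ← diracZ_eq_coeff_single]
          simp only [Pi.add_apply, Pi.smul_apply, Finset.sum_apply, smul_eq_mul,
            convPow_diracZ_sub_diracZ, factorialMoment, descFactorial_zero, factorial_zero,
            cast_one, one_mul, div_one, U]

end OneSided

lemma nuPlus_eq_factorialMoment (F : ℤ → ℝ) : nuPlus F = factorialMoment fun n => F n := rfl

lemma nuMinus_eq_factorialMoment (F : ℤ → ℝ) : nuMinus F = factorialMoment fun n => F (-n) := rfl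

theorem factorial_moment_expansion_general (F : ℤ → ℝ) (s : ℕ)
    (hF0 : ∀ k, 0 ≤ F k) (hF1 : ∑' k, F k = 1)
    (hplus : Summable fun m : ℕ => (m.descFactorial (s + 1) : ℝ) * F (m : ℤ))
    (hminus : Summable fun m : ℕ => (m.descFactorial (s + 1) : ℝ) * F (-(m : ℤ))) :
    ∃ R : ℤ → ℝ,
      tvNorm R ≤ (nuPlus F (s + 1) + nuMinus F (s + 1)) / (s + 1).factorial
          * tvNorm (convPow (diracZ 1 - diracZ 0) (s + 1)) ∧
      F = diracZ 0
          + (∑ m ∈ Finset.Icc 1 s, (nuPlus F m / m.factorial) • convPow (diracZ 1 - diracZ 0) m)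
          + (∑ m ∈ Finset.Icc 1 s, (nuMinus F m / m.factorial) • convPow (diracZ (-1) - diracZ 0) m)
          + R := by
  obtain ⟨Rplus, hRplus, hRplus_le, hFplus⟩ :=
    exists_diracMixture_expansion 1 (fun n => F n) s (fun n => hF0 _) hplus
  obtain ⟨Rminus, hRminus, hRminus_le, hFminus⟩ :=
    exists_diracMixture_expansion (-1) (fun n => F (-n)) s (fun n => hF0 _) hminus
  rw [convPow_diracZ_sub_diracZ, tvNorm_coeff_pow_single_neg_sub_one,
    ← convPow_diracZ_sub_diracZ] at hRminus_le
  have hF : Summable F := by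
    by_contra h
    simp [tsum_eq_zero_of_not_summable h] at hF1
  have hmass : ∑' n : ℕ, F n + ∑' n : ℕ, F (-n) - F 0 = 1 := by
    rw [tsum_nat_add_tsum_nat_neg hF, hF1, add_sub_cancel_right]
  rw [nuPlus_eq_factorialMoment, nuMinus_eq_factorialMoment]
  refine ⟨Rplus + Rminus, ?_, ?_⟩
  · calc tvNorm (Rplus + Rminus) ≤ tvNorm Rplus + tvNorm Rminus := tvNorm_add_le hRplus hRminus
      _ ≤ _ := add_le_add hRplus_le hRminus_le
      _ = _ := by ring
  · conv_lhs => rw [eq_diracMixture_add_diracMixture F, hFplus, hFminus]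
    linear_combination (norm := module) hmass • diracZ 0

/-- Expansion of a probability distribution on ℤ in one-sided factorial moments,
with remainder of total variation at most
`(ν_{s+1}⁺(F)+ν_{s+1}⁻(F))/(s+1)! ⋅ ‖(δ₁−δ₀)^{s+1}‖`. -/
theorem factorial_moment_expansion (F : ℤ → ℝ) (s : ℕ) (hs : 1 ≤ s)
    (hF0 : ∀ k, 0 ≤ F k) (hF1 : ∑' k, F k = 1)
    (hplus : Summable fun m : ℕ => (m.descFactorial (s + 1) : ℝ) * F (m : ℤ))
    (hminus : Summable fun m : ℕ => (m.descFactorial (s + 1) : ℝ) * F (-(m : ℤ))) :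
    ∃ R : ℤ → ℝ,
      tvNorm R ≤ (nuPlus F (s + 1) + nuMinus F (s + 1)) / (s + 1).factorial
          * tvNorm (convPow (diracZ 1 - diracZ 0) (s + 1)) ∧
      F = diracZ 0
          + (∑ m ∈ Finset.Icc 1 s, (nuPlus F m / m.factorial) • convPow (diracZ 1 - diracZ 0) m)
          + (∑ m ∈ Finset.Icc 1 s, (nuMinus F m / m.factorial) • convPow (diracZ (-1) - diracZ 0) m)
          + R :=
  factorial_moment_expansion_general F s hF0 hF1 hplus hminus
end

section
/- If F and G are probability distributions on the integers whose one-sided factorial moments agree up to order s, i.e. ν_j^+(F)=ν_j^+(G) and ν_j^-(F)=ν_j^-(G) for j=1,…,s, and β_{s+1}^+(F,G)+β_{s+1}^-(F,G) < ∞, then F − G = (β_{s+1}^+(F,G)+β_{s+1}^-(F,G))/(s+1)! · (δ_1−δ_0)^{s+1} · Θ, where Θ is a signed measure of total variation norm at most 1; in particular ‖F−G‖ ≤ (β_{s+1}^+(F,G)+β_{s+1}^-(F,G))/(s+1)! · ‖(δ_1−δ_0)^{s+1}‖. -/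
/-- `β_k^±(F,G) = ν_k^±(F) + ν_k^±(G)`. -/
noncomputable def betaPlus (F G : ℤ → ℝ) (k : ℕ) : ℝ := nuPlus F k + nuPlus G k
noncomputable def betaMinus (F G : ℤ → ℝ) (k : ℕ) : ℝ := nuMinus F k + nuMinus G k

/-!
Write `D V k = V (k - 1) - V k`, so that convolving with `(δ₁ - δ₀)^n` is applying `Dⁿ`.
Split `F - G = P + N` with `P` carried by `ℕ` and `N` by `-ℕ`, each of total mass zero
(the atom at `0` absorbs the correction). The moment hypotheses say that the binomial moments
`∑ C(m, r) P m` vanish for `r ≤ s`, and likewise for `N`. On `ℕ` the tail sum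
`T u n = ∑_{m > n} u m` inverts `D` on sequences of mass zero, and by Fubini and the hockey-stick
identity `∑ C(n, r) T u n = ∑ C(m, r + 1) u m`; applied to `|u|` this also bounds
`∑ C(n, r) |T u n|`. Hence
`U = T^[s+1] P` solves `D^{s+1} U = P` with `‖U‖ ≤ ∑ C(m, s + 1) |P m|`. The side `-ℕ` follows
by reflection, which anticommutes with `D` up to a shift. Since `|F - G| ≤ F + G`, the bound
is at most `(β⁺ + β⁻) / (s + 1)!`, and `Θ` is `U` divided by that constant.
-/

open Finset

def backDiff : (ℤ → ℝ) →ₗ[ℝ] (ℤ → ℝ) :=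
  LinearMap.funLeft ℝ ℝ (fun k => k - 1) - LinearMap.id

lemma backDiff_apply (V : ℤ → ℝ) (k : ℤ) : backDiff V k = V (k - 1) - V k := rfl

lemma convZ_comm (P V : ℤ → ℝ) : convZ P V = convZ V P := by
  funext k
  rw [convZ, convZ, ← (Equiv.subLeft k).tsum_eq]
  simp [mul_comm]

lemma convZ_diracZ_zero (V : ℤ → ℝ) : convZ V (diracZ 0) = V := by
  funext k
  rw [convZ, tsum_eq_single k fun j hj => by simp [diracZ, sub_eq_zero, Ne.symm hj]]
  simp [diracZ]

lemma convZ_smul (P V : ℤ → ℝ) (a : ℝ) : convZ P (a • V) = a • convZ P V := by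
  funext k
  simp only [convZ, Pi.smul_apply, smul_eq_mul, mul_left_comm _ a, tsum_mul_left]

lemma convZ_backDiff {P V : ℤ → ℝ} (h : ∀ k, Summable fun j => P j * V (k - j)) :
    convZ P (backDiff V) = backDiff (convZ P V) := by
  funext k
  simp only [convZ, backDiff_apply]
  rw [← (h (k - 1)).tsum_sub (h k)]
  exact tsum_congr fun j => by rw [sub_right_comm, mul_sub]

lemma backDiff_diracZ_zero : backDiff (diracZ 0) = diracZ 1 - diracZ 0 := by
  funext k
  simp [backDiff_apply, diracZ, sub_eq_zero]

lemma convPow_delta_succ (n : ℕ) :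
    convPow (diracZ 1 - diracZ 0) (n + 1) = backDiff (convPow (diracZ 1 - diracZ 0) n) := by
  rw [convPow, ← backDiff_diracZ_zero, convZ_backDiff, convZ_diracZ_zero]
  intro k
  refine summable_of_ne_finset_zero (s := {k}) fun j hj => ?_
  simp [diracZ, sub_eq_zero, Ne.symm (notMem_singleton.mp hj)]

lemma convPow_delta_eq_zero {n : ℕ} {k : ℤ} (hk : k < 0 ∨ n < k) :
    convPow (diracZ 1 - diracZ 0) n k = 0 := by
  induction n generalizing k with
  | zero => simp [convPow, diracZ]; omega
  | succ n ih => rw [convPow_delta_succ, backDiff_apply, ih (by omega), ih (by omega), sub_zero]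

lemma summable_abs_convPow_delta (n : ℕ) :
    Summable fun k => |convPow (diracZ 1 - diracZ 0) n k| :=
  summable_of_ne_finset_zero (s := Icc 0 (n : ℤ)) fun k hk => by
    rw [convPow_delta_eq_zero (by simp only [mem_Icc] at hk; omega), abs_zero]

lemma convZ_convPow_delta (n : ℕ) (V : ℤ → ℝ) :
    convZ (convPow (diracZ 1 - diracZ 0) n) V = (backDiff ^ n) V := by
  induction n with
  | zero => rw [convPow, convZ_comm, convZ_diracZ_zero, pow_zero, Module.End.one_apply]
  | succ n ih =>
    rw [convPow_delta_succ, convZ_comm, convZ_backDiff, convZ_comm, ih, pow_succ',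
      Module.End.mul_apply]
    exact fun k => summable_of_ne_finset_zero (s := Icc (k - n) k) fun j hj => by
      rw [convPow_delta_eq_zero (by simp only [mem_Icc] at hj; omega), mul_zero]

lemma tvNorm_smul_s3 (a : ℝ) (V : ℤ → ℝ) : tvNorm (a • V) = |a| * tvNorm V := by
  simp only [tvNorm, Pi.smul_apply, smul_eq_mul, abs_mul, tsum_mul_left]

lemma tvNorm_add_le_s3 {V W : ℤ → ℝ} (hV : Summable fun k => |V k|) (hW : Summable fun k => |W k|) :
    tvNorm (V + W) ≤ tvNorm V + tvNorm W := by
  rw [tvNorm, tvNorm, tvNorm, ← hV.tsum_add hW]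
  exact (hV.add hW).of_nonneg_of_le (fun _ => abs_nonneg _) (fun k => abs_add_le _ _)
    |>.tsum_le_tsum (fun k => abs_add_le _ _) (hV.add hW)

lemma tvNorm_convZ_le {P Θ : ℤ → ℝ} (hP : Summable fun k => |P k|)
    (hΘ : Summable fun k => |Θ k|) : tvNorm (convZ P Θ) ≤ tvNorm P * tvNorm Θ := by
  set f : ℤ × ℤ → ℝ := fun q => |P q.1| * |Θ q.2|
  set g : ℤ × ℤ → ℝ := fun q => |P q.2| * |Θ (q.1 - q.2)|
  set e : ℤ × ℤ ≃ ℤ × ℤ := (Equiv.prodComm ℤ ℤ).trans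
    (Equiv.prodShear (Equiv.refl ℤ) fun j => Equiv.subRight j)
  have hP' : Summable fun j => ‖|P j|‖ := by simpa using hP
  have hΘ' : Summable fun i => ‖|Θ i|‖ := by simpa using hΘ
  have hf : Summable f := summable_mul_of_summable_norm hP' hΘ'
  have hg : Summable g := (e.summable_iff (f := f)).mpr hf
  have hpoint : ∀ k, |convZ P Θ k| ≤ ∑' j, g (k, j) := fun k => by
    simpa [convZ, g, abs_mul] using norm_tsum_le_tsum_norm (f := fun j => P j * Θ (k - j))
      (by simpa [abs_mul] using hg.prod_factor k)
  calc tvNorm (convZ P Θ) ≤ ∑' k, ∑' j, g (k, j) :=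
        hg.prod.of_nonneg_of_le (fun _ => abs_nonneg _) hpoint |>.tsum_le_tsum hpoint hg.prod
    _ = ∑' q, f q := by rw [← hg.tsum_prod, ← e.tsum_eq f]; rfl
    _ = tvNorm P * tvNorm Θ := (tsum_mul_tsum_of_summable_norm hP' hΘ').symm

lemma Nat.choose_le_choose_of_le_half {m j n : ℕ} (hjn : j ≤ n) (hn : 2 * n ≤ m) :
    m.choose j ≤ m.choose n := by
  induction n, hjn using Nat.le_induction with
  | base => rfl
  | succ n _ ih => exact (ih (by omega)).trans (Nat.choose_le_succ_of_lt_half_left (by omega))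

lemma Nat.sum_range_choose_eq_choose_succ (m r : ℕ) :
    ∑ n ∈ range m, n.choose r = m.choose (r + 1) := by
  induction m with
  | zero => simp
  | succ m ih => rw [sum_range_succ, ih, Nat.choose_succ_succ', add_comm]

lemma summable_choose_mul_of_le_s3 {w : ℕ → ℝ} {j n : ℕ} (hw : ∀ m, 0 ≤ w m) (hjn : j ≤ n)
    (h : Summable fun m => (m.choose n : ℝ) * w m) :
    Summable fun m => (m.choose j : ℝ) * w m := by
  refine h.of_norm_bounded_eventually_nat (Filter.eventually_atTop.mpr ⟨2 * n, fun m hm => ?_⟩)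
  rw [Real.norm_of_nonneg (mul_nonneg (Nat.cast_nonneg _) (hw m))]
  gcongr
  · exact hw m
  · exact Nat.choose_le_choose_of_le_half hjn hm

noncomputable def tailSum (u : ℕ → ℝ) (n : ℕ) : ℝ := ∑' m, if n < m then u m else 0

lemma summable_ite_lt {u : ℕ → ℝ} (hu : Summable u) (n : ℕ) :
    Summable fun m => if n < m then u m else 0 := by
  refine (hu.indicator (Set.Ioi n)).congr fun m => ?_
  simp [Set.indicator_apply]

lemma tailSum_sub_tailSum_succ {u : ℕ → ℝ} (hu : Summable u) (n : ℕ) :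
    tailSum u n - tailSum u (n + 1) = u (n + 1) := by
  rw [tailSum, tailSum, ← (summable_ite_lt hu n).tsum_sub (summable_ite_lt hu (n + 1)),
    tsum_eq_single (n + 1) fun m hm => ?_]
  · simp
  · by_cases h : n < m
    · simp [h, show n + 1 < m by omega]
    · simp [h, show ¬ n + 1 < m by omega]

lemma add_tailSum_zero {u : ℕ → ℝ} (hu : Summable u) : u 0 + tailSum u 0 = ∑' m, u m := by
  rw [hu.tsum_eq_zero_add, tailSum, (summable_ite_lt hu 0).tsum_eq_zero_add]
  simp

lemma tsum_ite_lt_choose_mul (m r : ℕ) (x : ℝ) :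
    ∑' n, (if n < m then (n.choose r : ℝ) * x else 0) = (m.choose (r + 1) : ℝ) * x := by
  rw [tsum_eq_sum (s := range m) fun n hn => if_neg (by simpa using hn),
    sum_congr rfl fun n hn => if_pos (mem_range.mp hn), ← sum_mul, ← Nat.cast_sum,
    Nat.sum_range_choose_eq_choose_succ]

lemma hasSum_choose_mul_tailSum {u : ℕ → ℝ} {r : ℕ}
    (hu : Summable fun m => (m.choose (r + 1) : ℝ) * |u m|) :
    HasSum (fun n => (n.choose r : ℝ) * tailSum u n) (∑' m, (m.choose (r + 1) : ℝ) * u m) := by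
  let g : ℕ × ℕ → ℝ := fun q => if q.2 < q.1 then (q.2.choose r : ℝ) * u q.1 else 0
  have hg : Summable g := by
    refine .of_norm ((summable_prod_of_nonneg fun _ => norm_nonneg _).mpr ⟨fun m => ?_, ?_⟩)
    · exact summable_of_ne_finset_zero (s := range m) fun n hn => by
        simp [g, show ¬ n < m by simpa using hn]
    · refine hu.congr fun m => ?_
      rw [← tsum_ite_lt_choose_mul]
      exact tsum_congr fun n => by
        by_cases h : n < m <;> simp [g, h]
  have hfiber : ∀ n, (n.choose r : ℝ) * tailSum u n = ∑' m, g (m, n) := fun n => by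
    rw [tailSum, ← tsum_mul_left]
    exact tsum_congr fun m => by by_cases h : n < m <;> simp [g, h]
  have hsum : Summable fun n => ∑' m, g (m, n) := hg.prod_symm.prod
  have hcomm : ∑' n, ∑' m, g (m, n) = ∑' m, (m.choose (r + 1) : ℝ) * u m := by
    rw [Summable.tsum_comm (f := fun m n => g (m, n)) hg]
    exact tsum_congr fun m => tsum_ite_lt_choose_mul m r (u m)
  rw [funext hfiber, ← hcomm]
  exact hsum.hasSum

lemma abs_tailSum_le {u : ℕ → ℝ} (hu : Summable fun m => |u m|) (n : ℕ) :
    |tailSum u n| ≤ tailSum (fun m => |u m|) n := by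
  have h : Summable fun m => ‖if n < m then u m else 0‖ :=
    hu.of_nonneg_of_le (fun _ => norm_nonneg _) fun m => by split_ifs <;> simp
  simpa [tailSum, apply_ite] using norm_tsum_le_tsum_norm h

lemma summable_choose_mul_abs_tailSum {u : ℕ → ℝ} {r : ℕ}
    (hu : Summable fun m => (m.choose (r + 1) : ℝ) * |u m|) :
    Summable (fun n => (n.choose r : ℝ) * |tailSum u n|) ∧
      ∑' n, (n.choose r : ℝ) * |tailSum u n| ≤ ∑' m, (m.choose (r + 1) : ℝ) * |u m| := by
  have hsum := hasSum_choose_mul_tailSum (u := fun m => |u m|) (by simpa using hu)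
  have hu0 : Summable fun m => |u m| := by
    simpa using summable_choose_mul_of_le_s3 (fun m => abs_nonneg (u m)) (Nat.zero_le _) hu
  have hle : ∀ n, (n.choose r : ℝ) * |tailSum u n| ≤ (n.choose r : ℝ) * tailSum (|u ·|) n :=
    fun n => mul_le_mul_of_nonneg_left (abs_tailSum_le hu0 n) (Nat.cast_nonneg _)
  have hs := hsum.summable.of_nonneg_of_le (fun _ => by positivity) hle
  exact ⟨hs, (hs.tsum_le_tsum hle hsum.summable).trans hsum.tsum_eq.le⟩

section TailSumIterate

variable {p : ℕ → ℝ}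

lemma summable_choose_mul_abs_tailSum_iterate (k : ℕ) {r : ℕ}
    (hp : Summable fun m => (m.choose (r + k) : ℝ) * |p m|) :
    Summable (fun m => (m.choose r : ℝ) * |tailSum^[k] p m|) ∧
      ∑' m, (m.choose r : ℝ) * |tailSum^[k] p m| ≤ ∑' m, (m.choose (r + k) : ℝ) * |p m| := by
  induction k generalizing r with
  | zero => exact ⟨hp, le_rfl⟩
  | succ k ih =>
    obtain ⟨hs, hle⟩ := ih (r := r + 1) (by rwa [add_right_comm, add_assoc])
    obtain ⟨hs', hle'⟩ := summable_choose_mul_abs_tailSum hs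
    rw [Function.iterate_succ_apply']
    refine ⟨hs', hle'.trans (hle.trans_eq ?_)⟩
    rw [add_right_comm, add_assoc]

lemma tsum_choose_mul_tailSum_iterate (k : ℕ) {r : ℕ}
    (hp : Summable fun m => (m.choose (r + k) : ℝ) * |p m|) :
    ∑' m, (m.choose r : ℝ) * tailSum^[k] p m = ∑' m, (m.choose (r + k) : ℝ) * p m := by
  induction k generalizing r with
  | zero => rfl
  | succ k ih =>
    have hp' : Summable fun m => (m.choose (r + 1 + k) : ℝ) * |p m| := by
      rwa [add_right_comm, add_assoc]
    rw [Function.iterate_succ_apply',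
      (hasSum_choose_mul_tailSum (summable_choose_mul_abs_tailSum_iterate k hp').1).tsum_eq,
      ih hp', add_right_comm, add_assoc]

end TailSumIterate

noncomputable def natExtend (u : ℕ → ℝ) : ℤ → ℝ := Function.extend (↑) u 0

lemma natExtend_natCast (u : ℕ → ℝ) (n : ℕ) : natExtend u n = u n :=
  Nat.cast_injective.extend_apply _ _ _

lemma natExtend_of_neg (u : ℕ → ℝ) {k : ℤ} (hk : k < 0) : natExtend u k = 0 :=
  Function.extend_apply' _ _ _ fun ⟨n, hn⟩ => by omega

lemma abs_natExtend (v : ℕ → ℝ) : (fun k => |natExtend v k|) = natExtend fun n => |v n| := by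
  funext k
  rcases lt_or_ge k 0 with hk | hk
  · simp [natExtend_of_neg _ hk]
  · lift k to ℕ using hk
    simp [natExtend_natCast]

lemma summable_abs_natExtend_iff (v : ℕ → ℝ) :
    Summable (fun k => |natExtend v k|) ↔ Summable fun n => |v n| := by
  rw [abs_natExtend, natExtend, summable_extend_zero Nat.cast_injective]

lemma tvNorm_natExtend (v : ℕ → ℝ) : tvNorm (natExtend v) = ∑' n, |v n| := by
  rw [tvNorm, abs_natExtend, natExtend, tsum_extend_zero Nat.cast_injective]

lemma backDiff_natExtend_tailSum {u : ℕ → ℝ} (hu : Summable u) (hmass : ∑' m, u m = 0) :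
    backDiff (natExtend (tailSum u)) = natExtend u := by
  funext k
  rw [backDiff_apply]
  rcases lt_trichotomy k 0 with hk | rfl | hk
  · rw [natExtend_of_neg _ hk, natExtend_of_neg _ (by omega : k - 1 < 0),
      natExtend_of_neg _ hk, sub_zero]
  · have h₁ := natExtend_natCast (tailSum u) 0
    have h₂ := natExtend_natCast u 0
    rw [Nat.cast_zero] at h₁ h₂
    rw [natExtend_of_neg _ (by norm_num), h₁, h₂]
    linarith [add_tailSum_zero hu]
  · obtain ⟨n, rfl⟩ : ∃ n : ℕ, k = (n + 1 : ℕ) := ⟨k.toNat - 1, by omega⟩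
    rw [Nat.cast_succ, add_sub_cancel_right, ← Nat.cast_succ, natExtend_natCast,
      natExtend_natCast, natExtend_natCast, tailSum_sub_tailSum_succ hu]

theorem exists_backDiff_pow_eq_natExtend {p : ℕ → ℝ} {s : ℕ}
    (hp : Summable fun m => (m.choose (s + 1) : ℝ) * |p m|)
    (hmom : ∀ r ≤ s, ∑' m, (m.choose r : ℝ) * p m = 0) :
    ∃ U : ℤ → ℝ, (backDiff ^ (s + 1)) U = natExtend p ∧ Summable (fun k => |U k|) ∧
      tvNorm U ≤ ∑' m, (m.choose (s + 1) : ℝ) * |p m| := by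
  have hpk : ∀ k ≤ s + 1, Summable fun m => (m.choose (0 + k) : ℝ) * |p m| := fun k hk => by
    rw [zero_add]
    exact summable_choose_mul_of_le_s3 (fun m => abs_nonneg _) hk hp
  have hdiff : ∀ k ≤ s + 1, (backDiff ^ k) (natExtend (tailSum^[k] p)) = natExtend p := by
    intro k hk
    induction k with
    | zero => rfl
    | succ k ih =>
      have hsum := (summable_choose_mul_abs_tailSum_iterate k (hpk k (by omega))).1
      have hmass := tsum_choose_mul_tailSum_iterate k (hpk k (by omega))
      simp only [Nat.choose_zero_right, Nat.cast_one, one_mul, zero_add] at hsum hmass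
      rw [hmom k (by omega)] at hmass
      rw [pow_succ, Module.End.mul_apply, Function.iterate_succ_apply',
        backDiff_natExtend_tailSum hsum.of_abs hmass, ih (by omega)]
  obtain ⟨hs, hle⟩ := summable_choose_mul_abs_tailSum_iterate (s + 1) (hpk (s + 1) le_rfl)
  simp only [Nat.choose_zero_right, Nat.cast_one, one_mul, zero_add] at hs hle
  refine ⟨natExtend (tailSum^[s + 1] p), hdiff _ le_rfl, ?_, ?_⟩
  · rwa [summable_abs_natExtend_iff]
  · rwa [tvNorm_natExtend]

def reflectAt (c : ℤ) (V : ℤ → ℝ) : ℤ → ℝ := fun k => V (c - k)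

lemma backDiff_reflectAt (c : ℤ) (V : ℤ → ℝ) :
    backDiff (reflectAt c V) = -reflectAt (c + 1) (backDiff V) := by
  funext k
  simp only [backDiff_apply, reflectAt, Pi.neg_apply, neg_sub]
  rw [show c - (k - 1) = c + 1 - k by ring, show c + 1 - k - 1 = c - k by ring]

lemma backDiff_pow_reflectAt (n : ℕ) (c : ℤ) (V : ℤ → ℝ) :
    (backDiff ^ n) (reflectAt c V) = (-1 : ℝ) ^ n • reflectAt (c + n) ((backDiff ^ n) V) := by
  induction n generalizing c V with
  | zero => simp
  | succ n ih =>
    rw [pow_succ, Module.End.mul_apply, Module.End.mul_apply, backDiff_reflectAt, map_neg, ih,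
      pow_succ, mul_neg_one, neg_smul, Nat.cast_succ, add_comm (n : ℤ), add_assoc]

lemma summable_abs_reflectAt_iff (c : ℤ) (V : ℤ → ℝ) :
    Summable (fun k => |reflectAt c V k|) ↔ Summable fun k => |V k| :=
  (Equiv.subLeft c).summable_iff (f := fun k => |V k|)

lemma tvNorm_reflectAt (c : ℤ) (V : ℤ → ℝ) : tvNorm (reflectAt c V) = tvNorm V :=
  (Equiv.subLeft c).tsum_eq fun k => |V k|

noncomputable def balanceAtZero (v : ℕ → ℝ) : ℕ → ℝ := Function.update v 0 (-∑' m, v (m + 1))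

lemma balanceAtZero_succ (v : ℕ → ℝ) (m : ℕ) : balanceAtZero v (m + 1) = v (m + 1) :=
  Function.update_of_ne m.succ_ne_zero _ _

lemma tsum_balanceAtZero {v : ℕ → ℝ} (hv : Summable v) : ∑' m, balanceAtZero v m = 0 := by
  have hv' : Summable fun m => balanceAtZero v (m + 1) := by
    simpa only [balanceAtZero_succ] using (summable_nat_add_iff 1).mpr hv
  rw [tsum_eq_zero_add' hv']
  simp [balanceAtZero]

lemma choose_mul_comp_balanceAtZero (v : ℕ → ℝ) {r : ℕ} (hr : r ≠ 0) (f : ℝ → ℝ) (m : ℕ) :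
    (m.choose r : ℝ) * f (balanceAtZero v m) = (m.choose r : ℝ) * f (v m) := by
  rcases m with _ | m
  · simp [Nat.choose_eq_zero_of_lt (Nat.pos_of_ne_zero hr)]
  · rw [balanceAtZero_succ]

lemma natExtend_balanceAtZero_add_reflectAt {M : ℤ → ℝ} (hM : Summable M)
    (hmass : ∑' k, M k = 0) :
    natExtend (balanceAtZero fun m => M m) +
      reflectAt 0 (natExtend (balanceAtZero fun m => M (-m))) = M := by
  funext k
  simp only [Pi.add_apply, reflectAt, zero_sub]
  rcases lt_trichotomy k 0 with hk | rfl | hk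
  · obtain ⟨n, rfl⟩ : ∃ n : ℕ, k = -(n + 1 : ℕ) := ⟨(-k).toNat - 1, by omega⟩
    rw [natExtend_of_neg _ hk, neg_neg, natExtend_natCast, balanceAtZero_succ, zero_add]
  · have hpos : Summable fun n : ℕ => M n := hM.comp_injective Nat.cast_injective
    have hneg : Summable fun n : ℕ => M (-(n + 1)) :=
      hM.comp_injective fun a b h => by simpa using h
    have hsplit := tsum_of_nat_of_neg_add_one hpos hneg
    rw [hpos.tsum_eq_zero_add, hmass] at hsplit
    push_cast at hsplit
    rw [neg_zero, ← Nat.cast_zero, natExtend_natCast, natExtend_natCast]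
    simp only [balanceAtZero, Function.update_self, Nat.cast_add, Nat.cast_one, Nat.cast_zero]
    linarith
  · obtain ⟨n, rfl⟩ : ∃ n : ℕ, k = (n + 1 : ℕ) := ⟨k.toNat - 1, by omega⟩
    rw [natExtend_natCast, balanceAtZero_succ, natExtend_of_neg _ (by omega), add_zero]

theorem exists_backDiff_pow_eq_natExtend_balanceAtZero {v : ℕ → ℝ} {s : ℕ} (hv : Summable v)
    (hmom : ∀ r, 1 ≤ r → r ≤ s → ∑' m, (m.choose r : ℝ) * v m = 0)
    (hw : Summable fun m => (m.choose (s + 1) : ℝ) * |v m|) :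
    ∃ U : ℤ → ℝ, (backDiff ^ (s + 1)) U = natExtend (balanceAtZero v) ∧
      Summable (fun k => |U k|) ∧ tvNorm U ≤ ∑' m, (m.choose (s + 1) : ℝ) * |v m| := by
  have hw' := hw.congr fun m => (choose_mul_comp_balanceAtZero v s.succ_ne_zero abs m).symm
  obtain ⟨U, hU, hUsum, hUle⟩ := exists_backDiff_pow_eq_natExtend (s := s) hw' fun r hr => by
    rcases r.eq_zero_or_pos with rfl | hr0
    · simpa using tsum_balanceAtZero hv
    · exact (tsum_congr (choose_mul_comp_balanceAtZero v hr0.ne' id)).trans (hmom r hr0 hr)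
  exact ⟨U, hU, hUsum,
    hUle.trans_eq (tsum_congr (choose_mul_comp_balanceAtZero v s.succ_ne_zero abs))⟩

theorem exists_backDiff_pow_eq {M : ℤ → ℝ} {s : ℕ} (hM : Summable M) (hmass : ∑' k, M k = 0)
    (hplus : ∀ r, 1 ≤ r → r ≤ s → ∑' m : ℕ, (m.choose r : ℝ) * M m = 0)
    (hminus : ∀ r, 1 ≤ r → r ≤ s → ∑' m : ℕ, (m.choose r : ℝ) * M (-m) = 0)
    (hp : Summable fun m : ℕ => (m.choose (s + 1) : ℝ) * |M m|)
    (hm : Summable fun m : ℕ => (m.choose (s + 1) : ℝ) * |M (-m)|) :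
    ∃ U : ℤ → ℝ, (backDiff ^ (s + 1)) U = M ∧ Summable (fun k => |U k|) ∧
      tvNorm U ≤ ∑' m : ℕ, (m.choose (s + 1) : ℝ) * |M m| +
        ∑' m : ℕ, (m.choose (s + 1) : ℝ) * |M (-m)| := by
  obtain ⟨U₁, hU₁, hU₁sum, hU₁le⟩ := exists_backDiff_pow_eq_natExtend_balanceAtZero
    (hM.comp_injective Nat.cast_injective) hplus hp
  obtain ⟨U₂, hU₂, hU₂sum, hU₂le⟩ := exists_backDiff_pow_eq_natExtend_balanceAtZero
    (hM.comp_injective (neg_injective.comp Nat.cast_injective)) hminus hm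
  set V := (-1 : ℝ) ^ (s + 1) • reflectAt (-(s + 1 : ℕ)) U₂
  have hVsum : Summable fun k => |V k| := by
    simpa [V, abs_mul] using (summable_abs_reflectAt_iff _ U₂).mpr hU₂sum
  refine ⟨U₁ + V, ?_, hU₁sum.add hVsum |>.of_nonneg_of_le (fun _ => abs_nonneg _)
    fun k => abs_add_le _ _, (tvNorm_add_le_s3 hU₁sum hVsum).trans ?_⟩
  · rw [map_add, map_smul, backDiff_pow_reflectAt, hU₁, hU₂, smul_smul, ← mul_pow,
      neg_one_mul, neg_neg, one_pow, one_smul, neg_add_cancel]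
    exact natExtend_balanceAtZero_add_reflectAt hM hmass
  · rw [tvNorm_smul_s3, tvNorm_reflectAt, abs_pow, abs_neg, abs_one, one_pow, one_mul]
    exact add_le_add hU₁le hU₂le

lemma descFactorial_mul_eq (m r : ℕ) (x : ℝ) :
    (m.descFactorial r : ℝ) * x = r.factorial * ((m.choose r : ℝ) * x) := by
  rw [Nat.descFactorial_eq_factorial_mul_choose, Nat.cast_mul, mul_assoc]

lemma summable_descFactorial_mul_iff {f : ℕ → ℝ} {r : ℕ} :
    Summable (fun m => (m.descFactorial r : ℝ) * f m) ↔
      Summable fun m => (m.choose r : ℝ) * f m := by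
  simp_rw [descFactorial_mul_eq]
  exact summable_mul_left_iff (by positivity)

lemma tsum_descFactorial_mul (f : ℕ → ℝ) (r : ℕ) :
    ∑' m, (m.descFactorial r : ℝ) * f m = r.factorial * ∑' m, (m.choose r : ℝ) * f m := by
  simp_rw [descFactorial_mul_eq]
  exact tsum_mul_left

lemma choose_moments_sub_of_descFactorial_moments {f g : ℕ → ℝ} {s : ℕ}
    (hf0 : ∀ m, 0 ≤ f m) (hg0 : ∀ m, 0 ≤ g m)
    (hmatch : ∀ j, 1 ≤ j → j ≤ s →
      ∑' m, (m.descFactorial j : ℝ) * f m = ∑' m, (m.descFactorial j : ℝ) * g m)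
    (hf : Summable fun m => (m.descFactorial (s + 1) : ℝ) * f m)
    (hg : Summable fun m => (m.descFactorial (s + 1) : ℝ) * g m) :
    (∀ r, 1 ≤ r → r ≤ s → ∑' m, (m.choose r : ℝ) * (f m - g m) = 0) ∧
      Summable (fun m => (m.choose (s + 1) : ℝ) * |f m - g m|) ∧
      ∑' m, (m.choose (s + 1) : ℝ) * |f m - g m| ≤
        (∑' m, (m.descFactorial (s + 1) : ℝ) * f m +
          ∑' m, (m.descFactorial (s + 1) : ℝ) * g m) / (s + 1).factorial := by
  rw [summable_descFactorial_mul_iff] at hf hg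
  have hle : ∀ m, (m.choose (s + 1) : ℝ) * |f m - g m| ≤
      (m.choose (s + 1) : ℝ) * f m + (m.choose (s + 1) : ℝ) * g m := fun m => by
    rw [← mul_add]
    gcongr
    exact abs_le.mpr ⟨by linarith [hf0 m], by linarith [hg0 m]⟩
  have hsum := (hf.add hg).of_nonneg_of_le (fun _ => by positivity) hle
  refine ⟨fun r hr hrs => ?_, hsum, ?_⟩
  · have hfr := summable_choose_mul_of_le_s3 hf0 (by omega : r ≤ s + 1) hf
    have hgr := summable_choose_mul_of_le_s3 hg0 (by omega : r ≤ s + 1) hg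
    have h := hmatch r hr hrs
    rw [tsum_descFactorial_mul, tsum_descFactorial_mul] at h
    simp_rw [mul_sub]
    rw [hfr.tsum_sub hgr, mul_left_cancel₀ (by positivity) h, sub_self]
  · rw [tsum_descFactorial_mul, tsum_descFactorial_mul, ← mul_add, mul_div_cancel_left₀ _
      (by positivity), ← hf.tsum_add hg]
    exact hsum.tsum_le_tsum hle (hf.add hg)

lemma exists_eq_smul_convZ {P U X : ℤ → ℝ} {c : ℝ} (hP : Summable fun k => |P k|)
    (hU : Summable fun k => |U k|) (hUc : tvNorm U ≤ c) (hX : X = convZ P U) :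
    ∃ Θ : ℤ → ℝ, tvNorm Θ ≤ 1 ∧ X = c • convZ P Θ ∧ tvNorm X ≤ c * tvNorm P := by
  have hc : 0 ≤ c := (tsum_nonneg fun _ => abs_nonneg _).trans hUc
  have hXc : X = c • convZ P (c⁻¹ • U) := by
    rcases hc.eq_or_lt with rfl | hc
    · have hU0 : U = 0 := funext fun k =>
        abs_nonpos_iff.mp ((hU.le_tsum k fun _ _ => abs_nonneg _).trans hUc)
      ext k
      simp [hX, hU0, convZ]
    · rw [convZ_smul, smul_inv_smul₀ hc.ne', hX]
  have hΘ : Summable fun k => |(c⁻¹ • U) k| := by simpa [abs_mul] using hU.mul_left |c⁻¹|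
  have hΘ1 : tvNorm (c⁻¹ • U) ≤ 1 := by
    rw [tvNorm_smul_s3, abs_inv, abs_of_nonneg hc]
    exact inv_mul_le_one_of_le₀ hUc hc
  refine ⟨c⁻¹ • U, hΘ1, hXc, ?_⟩
  rw [hXc, tvNorm_smul_s3, abs_of_nonneg hc]
  gcongr
  calc tvNorm (convZ P (c⁻¹ • U)) ≤ tvNorm P * tvNorm (c⁻¹ • U) := tvNorm_convZ_le hP hΘ
    _ ≤ tvNorm P := mul_le_of_le_one_right (tsum_nonneg fun _ => abs_nonneg _) hΘ1

theorem moment_matching_difference_general (F G : ℤ → ℝ) (s : ℕ)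
    (hF0 : ∀ k, 0 ≤ F k) (hF1 : ∑' k, F k = 1)
    (hG0 : ∀ k, 0 ≤ G k) (hG1 : ∑' k, G k = 1)
    (hmatchp : ∀ j, 1 ≤ j → j ≤ s → nuPlus F j = nuPlus G j)
    (hmatchm : ∀ j, 1 ≤ j → j ≤ s → nuMinus F j = nuMinus G j)
    (hFp : Summable fun m : ℕ => (m.descFactorial (s + 1) : ℝ) * F (m : ℤ))
    (hFm : Summable fun m : ℕ => (m.descFactorial (s + 1) : ℝ) * F (-(m : ℤ)))
    (hGp : Summable fun m : ℕ => (m.descFactorial (s + 1) : ℝ) * G (m : ℤ))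
    (hGm : Summable fun m : ℕ => (m.descFactorial (s + 1) : ℝ) * G (-(m : ℤ))) :
    ∃ Θ : ℤ → ℝ, tvNorm Θ ≤ 1 ∧
      F - G = ((betaPlus F G (s + 1) + betaMinus F G (s + 1)) / (s + 1).factorial)
          • convZ (convPow (diracZ 1 - diracZ 0) (s + 1)) Θ ∧
      tvNorm (F - G) ≤ (betaPlus F G (s + 1) + betaMinus F G (s + 1)) / (s + 1).factorial
          * tvNorm (convPow (diracZ 1 - diracZ 0) (s + 1)) := by
  have hF : Summable F := by_contra fun h => by simp [tsum_eq_zero_of_not_summable h] at hF1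
  have hG : Summable G := by_contra fun h => by simp [tsum_eq_zero_of_not_summable h] at hG1
  obtain ⟨hplus, hp, hple⟩ := choose_moments_sub_of_descFactorial_moments
    (fun m => hF0 m) (fun m => hG0 m) hmatchp hFp hGp
  obtain ⟨hminus, hm, hmle⟩ := choose_moments_sub_of_descFactorial_moments
    (fun m => hF0 (-m)) (fun m => hG0 (-m)) hmatchm hFm hGm
  obtain ⟨U, hU, hUsum, hUle⟩ := exists_backDiff_pow_eq (M := F - G) (hF.sub hG)
    (by simp only [Pi.sub_apply]; rw [hF.tsum_sub hG, hF1, hG1, sub_self]) hplus hminus hp hm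
  refine exists_eq_smul_convZ (summable_abs_convPow_delta _) hUsum (hUle.trans ?_)
    (by rw [convZ_convPow_delta, hU])
  rw [add_div]
  exact add_le_add hple hmle

/-- If the one-sided factorial moments of two distributions on ℤ agree up to order `s`,
then `F − G = (β_{s+1}⁺+β_{s+1}⁻)/(s+1)! ⋅ (δ₁−δ₀)^{s+1} Θ` with `‖Θ‖ ≤ 1`. -/
theorem moment_matching_difference (F G : ℤ → ℝ) (s : ℕ) (hs : 1 ≤ s)
    (hF0 : ∀ k, 0 ≤ F k) (hF1 : ∑' k, F k = 1)
    (hG0 : ∀ k, 0 ≤ G k) (hG1 : ∑' k, G k = 1)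
    (hmatchp : ∀ j, 1 ≤ j → j ≤ s → nuPlus F j = nuPlus G j)
    (hmatchm : ∀ j, 1 ≤ j → j ≤ s → nuMinus F j = nuMinus G j)
    (hFp : Summable fun m : ℕ => (m.descFactorial (s + 1) : ℝ) * F (m : ℤ))
    (hFm : Summable fun m : ℕ => (m.descFactorial (s + 1) : ℝ) * F (-(m : ℤ)))
    (hGp : Summable fun m : ℕ => (m.descFactorial (s + 1) : ℝ) * G (m : ℤ))
    (hGm : Summable fun m : ℕ => (m.descFactorial (s + 1) : ℝ) * G (-(m : ℤ))) :
    ∃ Θ : ℤ → ℝ, tvNorm Θ ≤ 1 ∧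
      F - G = ((betaPlus F G (s + 1) + betaMinus F G (s + 1)) / (s + 1).factorial)
          • convZ (convPow (diracZ 1 - diracZ 0) (s + 1)) Θ ∧
      tvNorm (F - G) ≤ (betaPlus F G (s + 1) + betaMinus F G (s + 1)) / (s + 1).factorial
          * tvNorm (convPow (diracZ 1 - diracZ 0) (s + 1)) :=
  moment_matching_difference_general F G s hF0 hF1 hG0 hG1 hmatchp hmatchm hFp hFm hGp hGm
end

section
/- Characteristic function bound via smoothness: for a probability distribution F on the integers, |F̂(t)| ≤ 1 − (1 − ‖(δ_1−δ_0)F‖/2) t² / (4π) for all |t| ≤ π, and consequently |F̂(t)| ≤ exp{ −(1 − ‖(δ_1−δ_0)F‖/2) sin²(t/2) / π } for |t| ≤ π. -/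
open Real

/-- Characteristic function `F̂(t) = ∑_{k∈ℤ} e^{itk} F{k}`. -/
noncomputable def fourierZ (M : ℤ → ℝ) (t : ℝ) : ℂ :=
  ∑' k : ℤ, Complex.exp (Complex.I * t * k) * M k

/-! With `m k = min (F k) (F (k - 1))`, whose total mass is `1 - ‖(δ₁ - δ₀)F‖ / 2`, split
`F = A + (m + m (· + 1)) / 2` with `A ≥ 0`. The second part has Fourier transform
`(1 + e^{-it}) / 2 · m̂(t)`, of modulus at most `|cos (t / 2)| ∑ m`, so
`|F̂(t)| ≤ 1 - (1 - cos (t / 2)) ∑ m`. For `|t| ≤ π`, Jordan's inequality `sin x ≥ 2x / π` gives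
`1 - cos (t / 2) ≥ t² / (4π)`; then `sin² (t / 2) ≤ t² / 4` and `1 - x ≤ e^{-x}` give the
exponential form. -/

open Complex in
lemma norm_one_add_exp_neg_I_mul (t : ℝ) : ‖1 + exp (-(I * t))‖ = 2 * |Real.cos (t / 2)| := by
  have h : 1 + exp (-(I * t)) = -(exp (I * ↑(π - t)) - 1) := by
    rw [ofReal_sub, mul_sub, Complex.exp_sub, mul_comm I (π : ℂ), exp_pi_mul_I, Complex.exp_neg]
    ring
  rw [h, norm_neg, norm_exp_I_mul_ofReal_sub_one, norm_mul, Real.norm_eq_abs, Real.norm_eq_abs,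
    sub_div, Real.sin_pi_div_two_sub, abs_two]

lemma sq_div_pi_le_one_sub_cos {x : ℝ} (hx : |x| ≤ π / 2) : x ^ 2 / π ≤ 1 - Real.cos x := by
  suffices h : MonotoneOn (fun y => 1 - Real.cos y - y ^ 2 / π) (Set.Icc 0 (π / 2)) by
    simpa [sub_nonneg] using h ⟨le_rfl, by positivity⟩ ⟨abs_nonneg x, hx⟩ (abs_nonneg x)
  have hderiv (y : ℝ) :
      HasDerivAt (fun y => 1 - Real.cos y - y ^ 2 / π) (Real.sin y - 2 / π * y) y :=
    (((Real.hasDerivAt_cos y).const_sub 1).sub ((hasDerivAt_pow 2 y).div_const π)).congr_deriv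
      (by simp only [neg_neg, Nat.cast_ofNat, Nat.add_one_sub_one, pow_one, sub_right_inj]; ring)
  refine monotoneOn_of_deriv_nonneg (convex_Icc _ _) (by fun_prop)
    (fun y _ => (hderiv y).differentiableAt.differentiableWithinAt) fun y hy => ?_
  rw [interior_Icc] at hy
  rw [(hderiv y).deriv, sub_nonneg]
  exact Real.mul_le_sin hy.1.le hy.2.le

lemma convZ_diracZ_sub_diracZ (a b : ℤ) (V : ℤ → ℝ) (k : ℤ) :
    convZ (diracZ a - diracZ b) V k = V (k - a) - V (k - b) := by
  have h : (fun j => (diracZ a - diracZ b) j * V (k - j)) =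
      fun j => (if j = a then V (k - a) else 0) - if j = b then V (k - b) else 0 := by
    ext j
    simp only [Pi.sub_apply, diracZ, sub_mul, ite_mul, one_mul, zero_mul]
    split_ifs <;> simp_all
  rw [convZ, h]
  exact ((hasSum_ite_eq a _).sub (hasSum_ite_eq b _)).tsum_eq

lemma tsum_min_comp_sub_one {F : ℤ → ℝ} (hF : Summable F) :
    ∑' k, min (F k) (F (k - 1)) = ∑' k, F k - tvNorm (convZ (diracZ 1 - diracZ 0) F) / 2 := by
  have hF₁ : Summable fun k => F (k - 1) := hF.comp_injective (sub_left_injective (b := 1))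
  have hmin (k : ℤ) : min (F k) (F (k - 1)) = (F k + F (k - 1) - |F (k - 1) - F k|) / 2 := by
    linarith [max_sub_min_eq_abs (F k) (F (k - 1)), min_add_max (F k) (F (k - 1))]
  have htv : tvNorm (convZ (diracZ 1 - diracZ 0) F) = ∑' k, |F (k - 1) - F k| := by
    simp only [tvNorm, convZ_diracZ_sub_diracZ, sub_zero]
  have hshift : ∑' k, F (k - 1) = ∑' k, F k := (Equiv.subRight 1).tsum_eq F
  rw [tsum_congr hmin, tsum_div_const, (hF.add hF₁).tsum_sub (hF₁.sub hF).abs, hF.tsum_add hF₁,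
    hshift, htv]
  ring

section fourierZ

open Complex

variable {M V : ℤ → ℝ}

lemma norm_fourierZ_term (M : ℤ → ℝ) (t : ℝ) (k : ℤ) :
    ‖exp (I * t * k) * M k‖ = |M k| := by
  rw [norm_mul, show I * t * k = I * ↑(t * k) by push_cast; ring, norm_exp_I_mul_ofReal, one_mul,
    norm_real, Real.norm_eq_abs]

lemma summable_fourierZ_term (hM : Summable M) (t : ℝ) :
    Summable fun k : ℤ => exp (I * t * k) * M k :=
  .of_norm <| by simpa only [norm_fourierZ_term] using hM.abs

lemma norm_fourierZ_le_tvNorm (hM : Summable M) (t : ℝ) : ‖fourierZ M t‖ ≤ tvNorm M := by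
  refine (norm_tsum_le_tsum_norm ?_).trans_eq ?_ <;> simp only [norm_fourierZ_term]
  exacts [hM.abs, rfl]

lemma tvNorm_eq_tsum_of_nonneg (hM : 0 ≤ M) : tvNorm M = ∑' k, M k :=
  tsum_congr fun k => abs_of_nonneg (hM k)

lemma fourierZ_add (hM : Summable M) (hV : Summable V) (t : ℝ) :
    fourierZ (M + V) t = fourierZ M t + fourierZ V t := by
  simp only [fourierZ, Pi.add_apply, ofReal_add, mul_add]
  exact (summable_fourierZ_term hM t).tsum_add (summable_fourierZ_term hV t)

lemma fourierZ_const_mul (c : ℝ) (M : ℤ → ℝ) (t : ℝ) :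
    fourierZ (fun k => c * M k) t = c * fourierZ M t := by
  simp only [fourierZ, ofReal_mul, mul_left_comm _ (c : ℂ)]
  exact tsum_mul_left

lemma fourierZ_comp_add_one (M : ℤ → ℝ) (t : ℝ) :
    fourierZ (fun k => M (k + 1)) t = exp (-(I * t)) * fourierZ M t := by
  rw [fourierZ, fourierZ, ← tsum_mul_left, ← (Equiv.subRight 1).tsum_eq]
  refine tsum_congr fun k => ?_
  simp only [Equiv.subRight_apply, sub_add_cancel, ← mul_assoc, ← Complex.exp_add]
  push_cast
  ring_nf

end fourierZ

open Complex in
lemma norm_fourierZ_le_tsum_sub_tsum_min {F : ℤ → ℝ} (hF₀ : 0 ≤ F) (hF : Summable F) (t : ℝ) :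
    ‖fourierZ F t‖ ≤ ∑' k, F k - (1 - |Real.cos (t / 2)|) * ∑' k, min (F k) (F (k - 1)) := by
  set m : ℤ → ℝ := fun k => min (F k) (F (k - 1))
  set A : ℤ → ℝ := fun k => F k - (m k + m (k + 1)) / 2
  have hm₀ : 0 ≤ m := fun k => le_min (hF₀ k) (hF₀ (k - 1))
  have hm : Summable m := hF.of_nonneg_of_le hm₀ fun k => min_le_left _ _
  have hm₁ : Summable fun k => m (k + 1) := hm.comp_injective (add_left_injective 1)
  have hA₀ : 0 ≤ A := fun k => by
    have : m (k + 1) ≤ F k := by simp only [m, add_sub_cancel_right]; exact min_le_right _ _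
    show 0 ≤ F k - (m k + m (k + 1)) / 2
    linarith [min_le_left (F k) (F (k - 1))]
  have hA : Summable A := hF.sub ((hm.add hm₁).div_const 2)
  have hsumA : ∑' k, A k = ∑' k, F k - ∑' k, m k := by
    have hshift : ∑' k, m (k + 1) = ∑' k, m k := (Equiv.addRight 1).tsum_eq m
    rw [hF.tsum_sub ((hm.add hm₁).div_const 2), tsum_div_const, hm.tsum_add hm₁, hshift]
    ring
  have hdecomp : fourierZ F t = fourierZ A t + (1 + exp (-(I * t))) / 2 * fourierZ m t := by
    have hhalf : Summable fun k => 2⁻¹ * m k := hm.mul_left _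
    have hhalf₁ : Summable fun k => 2⁻¹ * m (k + 1) := hm₁.mul_left _
    have : F = A + ((fun k => 2⁻¹ * m k) + fun k => 2⁻¹ * m (k + 1)) := by
      ext k; simp only [Pi.add_apply, A]; ring
    rw [this, fourierZ_add hA (by exact hhalf.add hhalf₁), fourierZ_add hhalf hhalf₁,
      fourierZ_const_mul, fourierZ_const_mul, fourierZ_comp_add_one]
    push_cast
    ring
  calc ‖fourierZ F t‖ ≤ ‖fourierZ A t‖ + ‖(1 + exp (-(I * t))) / 2‖ * ‖fourierZ m t‖ := by
        rw [hdecomp, ← norm_mul]; exact norm_add_le _ _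
    _ ≤ ∑' k, A k + |Real.cos (t / 2)| * ∑' k, m k := by
        rw [norm_div, norm_one_add_exp_neg_I_mul, ← tvNorm_eq_tsum_of_nonneg hA₀,
          ← tvNorm_eq_tsum_of_nonneg hm₀, RCLike.norm_ofNat, mul_div_cancel_left₀ _ two_ne_zero]
        gcongr
        exacts [norm_fourierZ_le_tvNorm hA t, norm_fourierZ_le_tvNorm hm t]
    _ = _ := by rw [hsumA]; ring

/-- Smoothness bound on the characteristic function of a distribution on ℤ:
for `|t| ≤ π`, `|F̂(t)| ≤ 1 − (1 − ‖(δ₁−δ₀)F‖/2) t²/(4π)` and hence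
`|F̂(t)| ≤ exp{−(1 − ‖(δ₁−δ₀)F‖/2) sin²(t/2)/π}`. -/
theorem charfun_smoothness_bound (F : ℤ → ℝ)
    (hF0 : ∀ k, 0 ≤ F k) (hF1 : ∑' k, F k = 1) (t : ℝ) (ht : |t| ≤ π) :
    ‖fourierZ F t‖
        ≤ 1 - (1 - tvNorm (convZ (diracZ 1 - diracZ 0) F) / 2) * t ^ 2 / (4 * π) ∧
    ‖fourierZ F t‖
        ≤ Real.exp (-((1 - tvNorm (convZ (diracZ 1 - diracZ 0) F) / 2) / π)
            * Real.sin (t / 2) ^ 2) := by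
  have hF : Summable F := by
    by_contra h
    simp [tsum_eq_zero_of_not_summable h] at hF1
  rw [← hF1, ← tsum_min_comp_sub_one hF, hF1]
  set χ := ∑' k, min (F k) (F (k - 1))
  have hχ : 0 ≤ χ := tsum_nonneg fun k => le_min (hF0 k) (hF0 (k - 1))
  have hcos : 0 ≤ Real.cos (t / 2) :=
    Real.cos_nonneg_of_mem_Icc ⟨by linarith [neg_abs_le t], by linarith [le_abs_self t]⟩
  have hquad : t ^ 2 / (4 * π) ≤ 1 - Real.cos (t / 2) :=
    calc t ^ 2 / (4 * π) = (t / 2) ^ 2 / π := by ring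
      _ ≤ _ := sq_div_pi_le_one_sub_cos (by rw [abs_div, abs_two]; linarith)
  have hmain : ‖fourierZ F t‖ ≤ 1 - χ * t ^ 2 / (4 * π) :=
    calc ‖fourierZ F t‖ ≤ 1 - (1 - Real.cos (t / 2)) * χ := by
          simpa only [hF1, abs_of_nonneg hcos] using norm_fourierZ_le_tsum_sub_tsum_min hF0 hF t
      _ ≤ 1 - χ * t ^ 2 / (4 * π) := by rw [mul_div_assoc, mul_comm]; gcongr
  refine ⟨hmain, hmain.trans ?_⟩
  have hsin : χ / π * Real.sin (t / 2) ^ 2 ≤ χ * t ^ 2 / (4 * π) :=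
    calc χ / π * Real.sin (t / 2) ^ 2 ≤ χ / π * (t / 2) ^ 2 := by
          gcongr _ * ?_; exact Real.sin_sq_le_sq
      _ = χ * t ^ 2 / (4 * π) := by ring
  linarith [Real.add_one_le_exp (-(χ / π) * Real.sin (t / 2) ^ 2)]
end

section
/- Derivative bound for centered characteristic functions: if F is a probability distribution on the integers with finite mean μ(F) and finite variance σ²(F), then for all |t| ≤ π, |d/dt ( F̂(t) e^{−itμ(F)} )| ≤ π² σ²(F) |sin(t/2)|. -/
open Real

/-- Mean of a distribution on ℤ. -/
noncomputable def meanZ (F : ℤ → ℝ) : ℝ := ∑' k : ℤ, (k : ℝ) * F k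

/-- Variance of a distribution on ℤ. -/
noncomputable def varZ (F : ℤ → ℝ) : ℝ := ∑' k : ℤ, ((k : ℝ) - meanZ F) ^ 2 * F k

/-!
Write `c k = k - μ(F)`. The centered characteristic function is `∑ e^{iuc_k} F{k}`, whose
derivative at `t` is `∑ i c_k e^{itc_k} F{k}`. Since `∑ c_k F{k} = 0`, this equals
`∑ i c_k (e^{itc_k} - 1) F{k}`, and `|e^{ix} - 1| ≤ |x|` bounds it by `|t| σ²(F)`.
Jordan's inequality `|t| ≤ π |sin(t/2)|` on `[-π, π]` and `π ≥ 1` finish the proof.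
-/

section Moments

variable {ι : Type*} {w x : ι → ℝ}

lemma summable_abs_mul_of_summable_sq_mul (hw : ∀ i, 0 ≤ w i) (h0 : Summable w)
    (h2 : Summable fun i => x i ^ 2 * w i) : Summable fun i => |x i| * w i := by
  refine Summable.of_nonneg_of_le (fun i => mul_nonneg (abs_nonneg _) (hw i)) (fun i => ?_)
    (h2.add h0)
  have hx : |x i| ≤ x i ^ 2 + 1 := by nlinarith [sq_abs (x i), sq_nonneg (|x i| - 1)]
  nlinarith [mul_le_mul_of_nonneg_right hx (hw i)]

lemma summable_sub_sq_mul (h0 : Summable w) (h1 : Summable fun i => x i * w i)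
    (h2 : Summable fun i => x i ^ 2 * w i) (a : ℝ) :
    Summable fun i => (x i - a) ^ 2 * w i := by
  have h := (h2.sub (h1.mul_left (2 * a))).add (h0.mul_left (a ^ 2))
  exact h.congr fun i => by ring

lemma tsum_sub_tsum_mul_mul_eq_zero (h0 : Summable w) (hw1 : ∑' i, w i = 1)
    (h1 : Summable fun i => x i * w i) :
    ∑' i, (x i - ∑' j, x j * w j) * w i = 0 := by
  simp only [sub_mul]
  rw [h1.tsum_sub (h0.mul_left _), tsum_mul_left, hw1, mul_one, sub_self]

end Moments

section CenteredCharFun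

variable {ι : Type*} {w c : ι → ℝ}

lemma norm_cexp_I_mul_ofReal_mul_ofReal (u a : ℝ) :
    ‖Complex.exp (Complex.I * u * a)‖ = 1 := by
  have h : Complex.I * u * a = ((u * a : ℝ) : ℂ) * Complex.I := by push_cast; ring
  rw [h, Complex.norm_exp_ofReal_mul_I]

lemma hasDerivAt_tsum_cexp_mul (hw : ∀ i, 0 ≤ w i) (h0 : Summable w)
    (h1 : Summable fun i => |c i| * w i) (t : ℝ) :
    HasDerivAt (fun u : ℝ => ∑' i, Complex.exp (Complex.I * u * c i) * w i)
      (∑' i, Complex.I * c i * Complex.exp (Complex.I * t * c i) * w i) t := by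
  refine hasDerivAt_tsum (g := fun i (u : ℝ) => Complex.exp (Complex.I * u * c i) * w i)
    (g' := fun i u => Complex.I * c i * Complex.exp (Complex.I * u * c i) * w i) h1
    (fun i u => ?_) (fun i u => ?_) (y₀ := 0) ?_ t
  · exact (((((hasDerivAt_id' (u : ℂ)).const_mul Complex.I).mul_const (c i : ℂ)).cexp.mul_const
      (w i : ℂ)).comp_ofReal).congr_deriv (by ring)
  · simp [norm_cexp_I_mul_ofReal_mul_ofReal, abs_of_nonneg (hw i)]
  · simpa using (RCLike.summable_ofReal ℝ).mpr h0

lemma norm_I_mul_mul_cexp_sub_one_mul_le {p : ℝ} (hp : 0 ≤ p) (t a : ℝ) :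
    ‖Complex.I * a * (Complex.exp (Complex.I * t * a) - 1) * p‖ ≤ |t| * (a ^ 2 * p) := by
  have h := Real.norm_exp_I_mul_ofReal_sub_one_le (x := t * a)
  push_cast at h
  rw [← mul_assoc] at h
  simp only [norm_mul, Complex.norm_I, Complex.norm_real, Real.norm_eq_abs, one_mul,
    abs_of_nonneg hp] at h ⊢
  calc |a| * ‖Complex.exp (Complex.I * t * a) - 1‖ * p ≤ |a| * (|t| * |a|) * p := by gcongr
    _ = |t| * (a ^ 2 * p) := by rw [← sq_abs a]; ring

lemma norm_deriv_tsum_cexp_mul_le (hw : ∀ i, 0 ≤ w i) (h0 : Summable w)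
    (h2 : Summable fun i => c i ^ 2 * w i) (hc : ∑' i, c i * w i = 0) (t : ℝ) :
    ‖deriv (fun u : ℝ => ∑' i, Complex.exp (Complex.I * u * c i) * w i) t‖
      ≤ |t| * ∑' i, c i ^ 2 * w i := by
  have h1 := summable_abs_mul_of_summable_sq_mul hw h0 h2
  have h1ℂ : Summable fun i => Complex.I * c i * w i := by
    refine Summable.of_norm (h1.congr fun i => ?_)
    simp [abs_of_nonneg (hw i)]
  have hcℂ : ∑' i, Complex.I * c i * w i = 0 := by
    simp_rw [mul_assoc, tsum_mul_left, ← Complex.ofReal_mul, ← Complex.ofReal_tsum, hc]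
    simp
  have hbound := fun i => norm_I_mul_mul_cexp_sub_one_mul_le (hw i) t (c i)
  have hsum := Summable.of_nonneg_of_le (fun _ => norm_nonneg _) hbound (h2.mul_left |t|)
  have hderiv : deriv (fun u : ℝ => ∑' i, Complex.exp (Complex.I * u * c i) * w i) t
      = ∑' i, Complex.I * c i * (Complex.exp (Complex.I * t * c i) - 1) * w i := by
    rw [(hasDerivAt_tsum_cexp_mul hw h0 h1 t).deriv]
    calc _ = ∑' i, (Complex.I * c i * (Complex.exp (Complex.I * t * c i) - 1) * w i
            + Complex.I * c i * w i) := tsum_congr fun i => by ring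
      _ = _ := by rw [(Summable.of_norm hsum).tsum_add h1ℂ, hcℂ, add_zero]
  calc _ ≤ ∑' i, ‖Complex.I * c i * (Complex.exp (Complex.I * t * c i) - 1) * w i‖ := by
        rw [hderiv]; exact norm_tsum_le_tsum_norm hsum
    _ ≤ ∑' i, |t| * (c i ^ 2 * w i) := hsum.tsum_le_tsum hbound (h2.mul_left _)
    _ = |t| * ∑' i, c i ^ 2 * w i := tsum_mul_left

end CenteredCharFun

lemma abs_le_pi_mul_abs_sin_half {t : ℝ} (ht : |t| ≤ π) : |t| ≤ π * |sin (t / 2)| := by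
  have h := Real.mul_abs_le_abs_sin (x := t / 2) (by rw [abs_div, abs_two]; linarith)
  rw [abs_div, abs_two] at h
  calc |t| = π * (2 / π * (|t| / 2)) := by field_simp
    _ ≤ π * |sin (t / 2)| := by gcongr

lemma fourierZ_mul_cexp_neg (M : ℤ → ℝ) (u a : ℝ) :
    fourierZ M u * Complex.exp (-(Complex.I * u * a))
      = ∑' k : ℤ, Complex.exp (Complex.I * u * ((k - a : ℝ) : ℂ)) * M k := by
  rw [fourierZ, ← tsum_mul_right]
  refine tsum_congr fun k => ?_
  rw [mul_right_comm, ← Complex.exp_add]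
  push_cast
  ring_nf

/-- Derivative bound for the centered characteristic function of a distribution on ℤ
with finite mean and variance: for `|t| ≤ π`,
`|(F̂(t) e^{−itμ(F)})'| ≤ π² σ²(F) |sin(t/2)|`. -/
theorem centered_charfun_deriv_bound (F : ℤ → ℝ)
    (hF0 : ∀ k, 0 ≤ F k) (hF1 : ∑' k, F k = 1)
    (h2 : Summable fun k : ℤ => (k : ℝ) ^ 2 * F k)
    (t : ℝ) (ht : |t| ≤ π) :
    ‖deriv (fun u : ℝ =>
        fourierZ F u * Complex.exp (-(Complex.I * u * (meanZ F : ℝ)))) t‖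
      ≤ π ^ 2 * varZ F * |Real.sin (t / 2)| := by
  have h0 : Summable F := by
    by_contra h
    simp [tsum_eq_zero_of_not_summable h] at hF1
  have h1 : Summable fun k : ℤ => (k : ℝ) * F k :=
    .of_norm <| (summable_abs_mul_of_summable_sq_mul hF0 h0 h2).congr fun k => by
      simp [abs_of_nonneg (hF0 k)]
  have hvar : 0 ≤ varZ F := tsum_nonneg fun k => mul_nonneg (sq_nonneg _) (hF0 k)
  simp_rw [fourierZ_mul_cexp_neg]
  calc _ ≤ |t| * varZ F :=
        norm_deriv_tsum_cexp_mul_le hF0 h0 (summable_sub_sq_mul h0 h1 h2 _)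
          (tsum_sub_tsum_mul_mul_eq_zero h0 hF1 h1) t
    _ ≤ π * |sin (t / 2)| * varZ F := by gcongr; exact abs_le_pi_mul_abs_sin_half ht
    _ ≤ π ^ 2 * varZ F * |sin (t / 2)| := by
        have : 1 ≤ π := by linarith [Real.pi_gt_three]
        nlinarith [mul_nonneg (mul_nonneg Real.pi_pos.le hvar) (abs_nonneg (sin (t / 2)))]
end

section
/- Upper bound for the concentration function via the characteristic function: for any probability distribution F on ℝ and any h > 0, Q(F,h) ≤ (96/95)² h ∫_{|t| ≤ 1/h} |F̂(t)| dt, where F̂ is the characteristic function of F. -/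
open MeasureTheory

/-- Lévy's concentration function `Q(F,h) = sup_x F([x, x+h])`. -/
noncomputable def concFun (F : Measure ℝ) (h : ℝ) : ℝ :=
  ⨆ x : ℝ, (F (Set.Icc x (x + h))).toReal

/-- Characteristic function `F̂(t) = ∫ e^{itx} dF(x)`. -/
noncomputable def charF (F : Measure ℝ) (t : ℝ) : ℂ :=
  ∫ x, Complex.exp (t * x * Complex.I) ∂F

/-!
The Fejér kernel `K_T(s) = ∫_{-T}^{T} (1 - |t|/T) cos(ts) dt = 2 (1 - cos Ts) / (T s²)` is
nonnegative and, since `sin v ≥ v - v³/6 ≥ (95/96) v` for `0 ≤ v ≤ 1/4`, at least `(95/96)² T`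
when `|Ts| ≤ 1/2`. Being the Fourier transform of the triangle `1 - |t|/T`, Fubini gives
`∫ K_T(x - c) dF(x) = ∫_{-T}^{T} (1 - |t|/T) e^{-itc} F̂(t) dt ≤ ∫_{-T}^{T} |F̂|`.
Centering `c` in an interval of length `h = 1/T` bounds its mass by `(96/95)² h ∫_{|t| ≤ 1/h} |F̂|`.
-/

open Real

lemma mul_le_sin {x : ℝ} (h0 : 0 ≤ x) (h1 : x ≤ 1 / 4) : 95 / 96 * x ≤ sin x := by
  nlinarith [sin_ge_sub_cube h0, pow_le_pow_left₀ h0 h1 2]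

lemma mul_sq_le_one_sub_cos {x : ℝ} (hx : |x| ≤ 1 / 2) :
    (95 / 96) ^ 2 * x ^ 2 / 2 ≤ 1 - cos x := by
  have hsin : 95 / 96 * (|x| / 2) ≤ sin (|x| / 2) := mul_le_sin (by positivity) (by linarith)
  have hcos : 1 - cos x = 2 * sin (|x| / 2) ^ 2 := by
    rw [← cos_abs x, sin_sq_eq_half_sub]
    ring_nf
  rw [hcos, ← sq_abs x]
  nlinarith [pow_le_pow_left₀ (by positivity) hsin 2]

namespace intervalIntegral

variable {E : Type*} [NormedAddCommGroup E] [NormedSpace ℝ E] {f : ℝ → E}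

theorem integral_eq_zero_of_odd (hf : f.Odd) (a : ℝ) : ∫ x in -a..a, f x = 0 := by
  have h := integral_comp_neg (a := -a) (b := a) f
  simp only [hf _, integral_neg, neg_neg] at h
  have h2 : (2 : ℝ) • ∫ x in -a..a, f x = 0 := by
    rw [two_smul]; nth_rw 1 [← h]; exact neg_add_cancel _
  simpa using h2

theorem integral_eq_two_smul_of_even (hf : f.Even) {a : ℝ}
    (hint : IntervalIntegrable f volume 0 a) :
    ∫ x in -a..a, f x = (2 : ℝ) • ∫ x in 0..a, f x := by
  have hleft : ∫ x in -a..0, f x = ∫ x in 0..a, f x := by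
    simpa [hf _] using (integral_comp_neg (a := 0) (b := a) f).symm
  have hint' : IntervalIntegrable f volume (-a) 0 := by
    simpa [hf _] using ((IntervalIntegrable.iff_comp_neg).mp hint).symm
  rw [← integral_add_adjacent_intervals hint' hint, hleft, two_smul]

end intervalIntegral

noncomputable def fejerKernel (T s : ℝ) : ℝ := ∫ t in -T..T, (1 - |t| / T) * cos (t * s)

section fejerKernel

variable {T : ℝ}

lemma continuous_fejerKernel (T : ℝ) : Continuous (fejerKernel T) :=
  intervalIntegral.continuous_parametric_intervalIntegral_of_continuous' (by fun_prop) _ _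

lemma fejerKernel_eq_two_mul (hT : 0 ≤ T) (s : ℝ) :
    fejerKernel T s = 2 * ∫ t in 0..T, (1 - t / T) * cos (t * s) := by
  rw [fejerKernel, intervalIntegral.integral_eq_two_smul_of_even (fun t ↦ by simp [mul_comm t])
    (Continuous.intervalIntegrable (by fun_prop) _ _), smul_eq_mul]
  congr 1
  refine intervalIntegral.integral_congr fun t ht ↦ ?_
  rw [Set.uIcc_of_le hT] at ht
  simp only [abs_of_nonneg ht.1]

lemma fejerKernel_zero (hT : 0 < T) : fejerKernel T 0 = T := by
  rw [fejerKernel_eq_two_mul hT.le]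
  simp only [mul_zero, cos_zero, mul_one]
  rw [intervalIntegral.integral_sub intervalIntegrable_const
    (intervalIntegral.intervalIntegrable_id.div_const T)]
  simp only [intervalIntegral.integral_const, intervalIntegral.integral_div, integral_id]
  field_simp
  ring

lemma fejerKernel_of_ne_zero (hT : 0 < T) {s : ℝ} (hs : s ≠ 0) :
    fejerKernel T s = 2 * (1 - cos (T * s)) / (T * s ^ 2) := by
  have hderiv : ∀ t ∈ Set.uIcc 0 T, HasDerivAt
      (fun t ↦ (1 - t / T) * sin (t * s) / s - cos (t * s) / (T * s ^ 2))
      ((1 - t / T) * cos (t * s)) t := by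
    intro t _
    have hlin : HasDerivAt (fun t : ℝ ↦ t * s) s t := hasDerivAt_mul_const s
    have := ((((hasDerivAt_id t).div_const T).const_sub 1).mul
      ((hasDerivAt_sin _).comp t hlin)).div_const s |>.sub
      (((hasDerivAt_cos _).comp t hlin).div_const (T * s ^ 2))
    refine this.congr_deriv ?_
    simp only [Function.comp_apply, id]
    field_simp
    ring
  rw [fejerKernel_eq_two_mul hT.le, intervalIntegral.integral_eq_sub_of_hasDerivAt hderiv
    (Continuous.intervalIntegrable (by fun_prop) _ _)]
  field_simp
  simp only [sub_self, mul_zero, zero_mul, zero_sub, sub_zero, sin_zero, cos_zero, sub_neg_eq_add]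
  ring

lemma fejerKernel_nonneg (hT : 0 < T) (s : ℝ) : 0 ≤ fejerKernel T s := by
  rcases eq_or_ne s 0 with rfl | hs
  · simpa [fejerKernel_zero hT] using hT.le
  · rw [fejerKernel_of_ne_zero hT hs]
    exact div_nonneg (by linarith [cos_le_one (T * s)]) (by positivity)

lemma fejerKernel_le (hT : 0 < T) (s : ℝ) : fejerKernel T s ≤ T := by
  rcases eq_or_ne s 0 with rfl | hs
  · rw [fejerKernel_zero hT]
  · rw [fejerKernel_of_ne_zero hT hs, div_le_iff₀ (by positivity)]
    nlinarith [one_sub_sq_div_two_le_cos (x := T * s)]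

lemma mul_le_fejerKernel (hT : 0 < T) {s : ℝ} (hs : |T * s| ≤ 1 / 2) :
    (95 / 96) ^ 2 * T ≤ fejerKernel T s := by
  rcases eq_or_ne s 0 with rfl | hs0
  · rw [fejerKernel_zero hT]
    nlinarith
  · rw [fejerKernel_of_ne_zero hT hs0, le_div_iff₀ (by positivity)]
    nlinarith [mul_sq_le_one_sub_cos hs]

lemma integral_mul_exp_eq_fejerKernel (T s : ℝ) :
    ∫ t in -T..T, ((1 - |t| / T : ℝ) : ℂ) * Complex.exp (t * s * Complex.I) = fejerKernel T s := by
  have hsplit : ∀ t : ℝ, ((1 - |t| / T : ℝ) : ℂ) * Complex.exp (t * s * Complex.I)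
      = (((1 - |t| / T) * cos (t * s) : ℝ) : ℂ)
        + (((1 - |t| / T) * sin (t * s) : ℝ) : ℂ) * Complex.I := by
    intro t
    rw [← Complex.ofReal_mul, Complex.exp_mul_I, ← Complex.ofReal_cos, ← Complex.ofReal_sin]
    push_cast
    ring
  have hodd : Function.Odd fun t : ℝ ↦ (((1 - |t| / T) * sin (t * s) : ℝ) : ℂ) * Complex.I := by
    intro t
    simp [neg_mul, sin_neg]
  simp_rw [hsplit]
  rw [intervalIntegral.integral_add (Continuous.intervalIntegrable (by fun_prop) _ _)
    (Continuous.intervalIntegrable (by fun_prop) _ _),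
    intervalIntegral.integral_eq_zero_of_odd hodd, intervalIntegral.integral_ofReal, add_zero,
    fejerKernel]

end fejerKernel

lemma intervalIntegral_mul_charFun {μ : Measure ℝ} [IsFiniteMeasure μ] {w : ℝ → ℂ} {a b : ℝ}
    (hw : IntervalIntegrable w volume a b) :
    ∫ t in a..b, w t * charFun μ t
      = ∫ x, (∫ t in a..b, w t * Complex.exp (t * x * Complex.I)) ∂μ := by
  have hnorm : ∀ t x : ℝ, ‖w t * Complex.exp (t * x * Complex.I)‖ = ‖w t‖ := fun t x ↦ by
    rw [norm_mul, ← Complex.ofReal_mul, Complex.norm_exp_ofReal_mul_I, mul_one]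
  have hint : Integrable (Function.uncurry fun t x : ℝ ↦ w t * Complex.exp (t * x * Complex.I))
      ((volume.restrict (Set.uIoc a b)).prod μ) := by
    refine Integrable.mono' (hw.def'.norm.comp_fst μ) ?_ (.of_forall fun p ↦ (hnorm p.1 p.2).le)
    exact hw.def'.aestronglyMeasurable.comp_fst.mul (by fun_prop)
  simp_rw [charFun_apply_real, ← integral_const_mul]
  exact intervalIntegral_integral_swap hint

section concentration

variable {μ : Measure ℝ} [IsFiniteMeasure μ] {T : ℝ}

lemma integral_fejerKernel_sub_le (hT : 0 < T) (c : ℝ) :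
    ∫ x, fejerKernel T (x - c) ∂μ ≤ ∫ t in -T..T, ‖charFun μ t‖ := by
  set w : ℝ → ℂ := fun t ↦ ((1 - |t| / T : ℝ) : ℂ) * Complex.exp (-(t * c) * Complex.I)
  have hw : Continuous w := by fun_prop
  have hrepr : ((∫ x, fejerKernel T (x - c) ∂μ : ℝ) : ℂ) = ∫ t in -T..T, w t * charFun μ t := by
    rw [intervalIntegral_mul_charFun (hw.intervalIntegrable _ _), ← integral_complex_ofReal]
    congr 1 with x
    rw [← integral_mul_exp_eq_fejerKernel]
    congr 1 with t
    simp only [w, mul_assoc, ← Complex.exp_add]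
    push_cast
    ring_nf
  have hw_le : ∀ t ∈ Set.Icc (-T) T, ‖w t‖ ≤ 1 := fun t ht ↦ by
    have : |t| ≤ T := abs_le.mpr ht
    rw [norm_mul, ← Complex.ofReal_mul, ← Complex.ofReal_neg, Complex.norm_exp_ofReal_mul_I,
      mul_one, Complex.norm_real, Real.norm_eq_abs, abs_le]
    constructor
    · linarith [(div_le_one hT).mpr this]
    · linarith [show 0 ≤ |t| / T by positivity]
  have hcont : Continuous (charFun μ) := continuous_charFun
  calc ∫ x, fejerKernel T (x - c) ∂μ
      ≤ ‖((∫ x, fejerKernel T (x - c) ∂μ : ℝ) : ℂ)‖ := by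
        rw [Complex.norm_real]; exact Real.le_norm_self _
    _ ≤ ∫ t in -T..T, ‖w t * charFun μ t‖ := by
        rw [hrepr]; exact intervalIntegral.norm_integral_le_integral_norm (by linarith)
    _ ≤ ∫ t in -T..T, ‖charFun μ t‖ := by
        refine intervalIntegral.integral_mono_on (by linarith)
          ((hw.mul hcont).norm.intervalIntegrable _ _) (hcont.norm.intervalIntegrable _ _)
          fun t ht ↦ ?_
        rw [norm_mul]
        exact mul_le_of_le_one_left (norm_nonneg _) (hw_le t ht)

lemma mul_measureReal_Icc_le_integral_fejerKernel (hT : 0 < T) {a b : ℝ}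
    (hab : T * (b - a) ≤ 1) :
    (95 / 96) ^ 2 * T * μ.real (Set.Icc a b) ≤ ∫ x, fejerKernel T (x - (a + b) / 2) ∂μ := by
  have hint : Integrable (fun x ↦ fejerKernel T (x - (a + b) / 2)) μ :=
    .of_bound ((continuous_fejerKernel T).comp (by fun_prop)).aestronglyMeasurable T
      (.of_forall fun x ↦ by
        rw [Real.norm_of_nonneg (fejerKernel_nonneg hT _)]; exact fejerKernel_le hT _)
  calc (95 / 96) ^ 2 * T * μ.real (Set.Icc a b)
      ≤ ∫ x in Set.Icc a b, fejerKernel T (x - (a + b) / 2) ∂μ := by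
        refine setIntegral_ge_of_const_le_real measurableSet_Icc (measure_ne_top μ _)
          (fun x hx ↦ mul_le_fejerKernel hT ?_) hint.integrableOn
        have : |x - (a + b) / 2| ≤ (b - a) / 2 :=
          abs_le.mpr ⟨by linarith [hx.1], by linarith [hx.2]⟩
        rw [abs_mul, abs_of_pos hT]
        nlinarith
    _ ≤ ∫ x, fejerKernel T (x - (a + b) / 2) ∂μ :=
        setIntegral_le_integral hint (.of_forall fun x ↦ fejerKernel_nonneg hT _)

end concentration

/-- Upper bound for the concentration function via the characteristic function:
`Q(F,h) ≤ (96/95)² h ∫_{|t|≤1/h} |F̂(t)| dt`. -/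
theorem concFun_le_charFun_integral (F : Measure ℝ) [IsProbabilityMeasure F]
    (h : ℝ) (hh : 0 < h) :
    concFun F h ≤ (96 / 95) ^ 2 * h * ∫ t in (-(1 / h))..(1 / h), ‖charF F t‖ := by
  have hcharF : charF F = charFun F := funext fun t ↦ (charFun_apply_real t).symm
  have hT : 0 < 1 / h := by positivity
  refine ciSup_le fun x ↦ ?_
  have key := (mul_measureReal_Icc_le_integral_fejerKernel (μ := F) hT
    (a := x) (b := x + h) (by simp [hh.ne'])).trans (integral_fejerKernel_sub_le hT _)
  rw [hcharF]
  calc (F (Set.Icc x (x + h))).toReal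
      = (96 / 95) ^ 2 * h * ((95 / 96) ^ 2 * (1 / h) * F.real (Set.Icc x (x + h))) := by
        field_simp; rfl
    _ ≤ _ := by gcongr
end

section
/- Lower bound via the concentration function for nonnegative characteristic functions: if F is a probability distribution on ℝ whose characteristic function satisfies F̂(t) ≥ 0 for all t, then for any h > 0, h ∫_{|t| ≤ 1/h} F̂(t) dt ≤ C Q(F,h) for an absolute constant C. -/
open MeasureTheory

/-!
Integrating `F̂` against the triangle weight `(1 - |t|/T)₊` gives, by Fubini, the integral of the
Fejér kernel `T sinc²(Tx/2)` against `F`. For `T = 2/h` the weight is at least `1/2` on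
`[-1/h, 1/h]`, so nonnegativity of `F̂` bounds the left-hand side by twice this Fejér integral.
Cutting `ℝ` into the intervals `[kh, (k+1)h)`, each of `F`-mass at most `Q(F,h)`, on which the
kernel is `O(h⁻¹ (1 + k²)⁻¹)`, bounds the Fejér integral by a summable series times `Q(F,h)`.
-/

open Real Set

lemma integral_one_sub_div_mul_cos {T : ℝ} (hT : T ≠ 0) (x : ℝ) :
    ∫ t in (0 : ℝ)..T, (1 - t / T) * cos (t * x) = T / 2 * sinc (T * x / 2) ^ 2 := by
  rcases eq_or_ne x 0 with rfl | hx
  · simp only [mul_zero, zero_div, cos_zero, mul_one, sinc_zero, one_pow, sub_zero, smul_eq_mul,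
      intervalIntegrable_const, intervalIntegral.intervalIntegrable_id,
      IntervalIntegrable.div_const, intervalIntegral.integral_sub, intervalIntegral.integral_const,
      intervalIntegral.integral_div, integral_id]
    field_simp
    ring
  · have hderiv : ∀ t ∈ uIcc 0 T, HasDerivAt
        (fun t => (1 - t / T) * (sin (t * x) / x) - cos (t * x) / (T * x ^ 2))
        ((1 - t / T) * cos (t * x)) t := by
      intro t _
      have hlin : HasDerivAt (fun t : ℝ => t * x) x t := by
        simpa using (hasDerivAt_id t).mul_const x
      refine (((((hasDerivAt_id' t).div_const T).const_sub 1).mul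
        (hlin.sin.div_const x)).sub (hlin.cos.div_const (T * x ^ 2))).congr_deriv ?_
      field_simp
      ring
    rw [intervalIntegral.integral_eq_sub_of_hasDerivAt hderiv
      ((by fun_prop : Continuous _).intervalIntegrable _ _),
      sinc_of_ne_zero (by positivity), show T * x = 2 * (T * x / 2) by ring, cos_two_mul, cos_sq']
    simp only [zero_mul, sin_zero, cos_zero]
    field_simp
    ring

lemma integral_one_sub_abs_div_mul_cos {T : ℝ} (hT : 0 < T) (x : ℝ) :
    ∫ t in (-T)..T, (1 - |t| / T) * cos (t * x) = T * sinc (T * x / 2) ^ 2 := by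
  have hpos : ∫ t in (0 : ℝ)..T, (1 - |t| / T) * cos (t * x) = T / 2 * sinc (T * x / 2) ^ 2 := by
    rw [← integral_one_sub_div_mul_cos hT.ne' x]
    refine intervalIntegral.integral_congr fun t ht => ?_
    rw [uIcc_of_le hT.le] at ht
    simp only [abs_of_nonneg ht.1]
  have hneg : ∫ t in (-T)..0, (1 - |t| / T) * cos (t * x) = T / 2 * sinc (T * x / 2) ^ 2 := by
    have := intervalIntegral.integral_comp_neg (a := 0) (b := T)
      fun t => (1 - |t| / T) * cos (t * x)
    simp only [abs_neg, neg_mul, cos_neg, neg_zero] at this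
    rw [← this, hpos]
  have hcont : Continuous fun t => (1 - |t| / T) * cos (t * x) := by fun_prop
  rw [← intervalIntegral.integral_add_adjacent_intervals (hcont.intervalIntegrable _ 0)
    (hcont.intervalIntegrable _ _), hneg, hpos]
  ring

lemma charF_eq_charFun (F : Measure ℝ) : charF F = charFun F := by
  funext t
  rw [charFun_apply_real]
  rfl

lemma re_charFun_eq_integral_cos (F : Measure ℝ) [IsFiniteMeasure F] (t : ℝ) :
    (charFun F t).re = ∫ x, cos (t * x) ∂F := by
  have hint : Integrable (fun x : ℝ => Complex.exp (t * x * Complex.I)) F :=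
    .of_bound (by fun_prop) 1 (ae_of_all _ fun x => by
      rw [← Complex.ofReal_mul, Complex.norm_exp_ofReal_mul_I])
  rw [charFun_apply_real, ← RCLike.re_eq_complex_re, ← integral_re hint]
  congr 1 with x
  rw [← Complex.ofReal_mul, RCLike.re_eq_complex_re, Complex.exp_ofReal_mul_I_re]

lemma one_sub_abs_div_mem_Icc {T t : ℝ} (hT : 0 < T) (ht : |t| ≤ T) :
    1 - |t| / T ∈ Icc 0 1 :=
  ⟨sub_nonneg.mpr ((div_le_one hT).mpr ht), sub_le_self _ (by positivity)⟩

lemma integral_one_sub_abs_div_mul_re_charFun (F : Measure ℝ) [IsFiniteMeasure F] {T : ℝ}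
    (hT : 0 < T) :
    ∫ t in (-T)..T, (1 - |t| / T) * (charFun F t).re = ∫ x, T * sinc (T * x / 2) ^ 2 ∂F := by
  simp_rw [re_charFun_eq_integral_cos, ← integral_const_mul,
    ← integral_one_sub_abs_div_mul_cos hT]
  refine intervalIntegral_integral_swap ?_
  have : IsFiniteMeasure (volume.restrict (uIoc (-T) T)) :=
    isFiniteMeasure_restrict.mpr measure_Ioc_lt_top.ne
  have hmem : ∀ᵐ p ∂(volume.restrict (uIoc (-T) T)).prod F, p.1 ∈ uIoc (-T) T := by
    rw [Measure.restrict_prod_eq_prod_univ]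
    filter_upwards [ae_restrict_mem (measurableSet_uIoc.prod MeasurableSet.univ)] with p hp
    exact hp.1
  refine .of_bound (by fun_prop) 1 ?_
  filter_upwards [hmem] with p hp
  rw [uIoc_of_le (by linarith)] at hp
  obtain ⟨hw0, hw1⟩ := one_sub_abs_div_mem_Icc hT (abs_le.mpr ⟨hp.1.le, hp.2⟩)
  rw [Function.uncurry_apply_pair, norm_mul, Real.norm_of_nonneg hw0]
  exact mul_le_one₀ hw1 (norm_nonneg _) (abs_cos_le_one _)

lemma integral_le_two_mul_integral_one_sub_abs_div_mul {ψ : ℝ → ℝ} {T : ℝ} (hT : 0 < T)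
    (hψ : ∀ t, 0 ≤ ψ t) (hint : IntervalIntegrable ψ volume (-T) T) :
    ∫ t in (-(T / 2))..(T / 2), ψ t ≤ 2 * ∫ t in (-T)..T, (1 - |t| / T) * ψ t := by
  have hw : IntervalIntegrable (fun t => 2 * ((1 - |t| / T) * ψ t)) volume (-T) T :=
    (hint.continuousOn_mul (by fun_prop)).const_mul 2
  have hsub : uIcc (-(T / 2)) (T / 2) ⊆ uIcc (-T) T := by
    rw [uIcc_of_le (by linarith), uIcc_of_le (by linarith)]
    exact Icc_subset_Icc (by linarith) (by linarith)
  rw [← intervalIntegral.integral_const_mul]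
  calc ∫ t in (-(T / 2))..(T / 2), ψ t
      ≤ ∫ t in (-(T / 2))..(T / 2), 2 * ((1 - |t| / T) * ψ t) := by
        refine intervalIntegral.integral_mono_on (by linarith)
          (hint.mono_set hsub) (hw.mono_set hsub) fun t ht => ?_
        have : |t| / T ≤ 1 / 2 := by
          rw [div_le_iff₀ hT]
          linarith [abs_le.mpr ht]
        nlinarith [hψ t]
    _ ≤ ∫ t in (-T)..T, 2 * ((1 - |t| / T) * ψ t) := by
        refine intervalIntegral.integral_mono_interval (by linarith) (by linarith) (by linarith)
          ?_ hw
        filter_upwards [ae_restrict_mem measurableSet_Ioc] with t ht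
        have hw0 := (one_sub_abs_div_mem_Icc hT (abs_le.mpr ⟨ht.1.le, ht.2⟩)).1
        exact mul_nonneg zero_le_two (mul_nonneg hw0 (hψ t))

lemma measureReal_Icc_le_concFun (F : Measure ℝ) [IsFiniteMeasure F] (h x : ℝ) :
    F.real (Icc x (x + h)) ≤ concFun F h :=
  le_ciSup (f := fun x => F.real (Icc x (x + h)))
    ⟨F.real univ, by rintro _ ⟨y, rfl⟩; exact measureReal_mono (subset_univ _)⟩ x

lemma integral_le_tsum_mul_concFun (F : Measure ℝ) [IsFiniteMeasure F] {h : ℝ} (hh : 0 < h)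
    {g : ℝ → ℝ} {b : ℤ → ℝ} (hg : Integrable g F) (hb : Summable b) (hb0 : ∀ k, 0 ≤ b k)
    (hgb : ∀ k : ℤ, ∀ x ∈ Ico (k * h) ((k + 1) * h), g x ≤ b k) :
    ∫ x, g x ∂F ≤ (∑' k, b k) * concFun F h := by
  have hcover : ⋃ k : ℤ, Ico (k * h) ((k + 1) * h) = univ := by
    simpa only [zsmul_eq_mul, Int.cast_add, Int.cast_one] using iUnion_Ico_zsmul hh
  have hdisj : Pairwise (Function.onFun Disjoint fun k : ℤ => Ico (k * h) ((k + 1) * h)) := by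
    simpa only [zsmul_eq_mul, Int.cast_add, Int.cast_one] using pairwise_disjoint_Ico_zsmul h
  have hsum : HasSum (fun k : ℤ => ∫ x in Ico (k * h) ((k + 1) * h), g x ∂F) (∫ x, g x ∂F) := by
    simpa only [hcover, Measure.restrict_univ] using hasSum_integral_iUnion
      (fun _ => measurableSet_Ico) hdisj (by rw [hcover]; exact hg.integrableOn)
  have hpiece (k : ℤ) : ∫ x in Ico (k * h) ((k + 1) * h), g x ∂F ≤ b k * concFun F h :=
    calc ∫ x in Ico (k * h) ((k + 1) * h), g x ∂F
        ≤ ∫ _ in Ico (k * h) ((k + 1) * h), b k ∂F :=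
          setIntegral_mono_on hg.integrableOn (integrableOn_const (measure_ne_top _ _))
            measurableSet_Ico (hgb k)
      _ = b k * F.real (Ico (k * h) ((k + 1) * h)) := by
          rw [setIntegral_const, smul_eq_mul, mul_comm]
      _ ≤ b k * F.real (Icc (k * h) (k * h + h)) :=
          mul_le_mul_of_nonneg_left
            (measureReal_mono fun x hx => ⟨hx.1, by linarith [hx.2]⟩) (hb0 k)
      _ ≤ b k * concFun F h := mul_le_mul_of_nonneg_left (measureReal_Icc_le_concFun F h _) (hb0 k)
  calc ∫ x, g x ∂F = ∑' k : ℤ, ∫ x in Ico (k * h) ((k + 1) * h), g x ∂F := hsum.tsum_eq.symm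
    _ ≤ ∑' k, b k * concFun F h := hsum.summable.tsum_le_tsum hpiece (hb.mul_right _)
    _ = (∑' k, b k) * concFun F h := tsum_mul_right

lemma sinc_sq_mul_one_add_sq_le_two (u : ℝ) : sinc u ^ 2 * (1 + u ^ 2) ≤ 2 := by
  rcases eq_or_ne u 0 with rfl | hu
  · norm_num [sinc_zero]
  · have hu2 : 0 < u ^ 2 := by positivity
    rw [sinc_of_ne_zero hu, div_pow, div_mul_eq_mul_div, div_le_iff₀ hu2]
    nlinarith [sin_sq_le_sq (x := u), sin_sq_le_one u]

lemma sinc_sq_le_of_mem_Ico {k : ℤ} {u : ℝ} (hu : u ∈ Ico (k : ℝ) (k + 1)) :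
    sinc u ^ 2 ≤ 6 / (1 + (k : ℝ) ^ 2) := by
  have hk : 1 + (k : ℝ) ^ 2 ≤ 3 * (1 + u ^ 2) := by
    nlinarith [sq_nonneg (u + (u - k)), mul_nonneg (sub_nonneg.2 hu.1) (sub_nonneg.2 hu.2.le)]
  rw [le_div_iff₀ (by positivity)]
  nlinarith [sinc_sq_mul_one_add_sq_le_two u, sq_nonneg (sinc u)]

lemma summable_one_div_one_add_sq_int : Summable fun k : ℤ => 1 / (1 + (k : ℝ) ^ 2) := by
  refine (summable_one_div_int_pow.mpr one_lt_two).of_norm_bounded_eventually ?_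
  filter_upwards [Filter.eventually_cofinite_ne 0] with k hk
  have hk2 : 0 < (k : ℝ) ^ 2 := by positivity
  rw [Real.norm_of_nonneg (by positivity)]
  exact one_div_le_one_div_of_le hk2 (by linarith)

lemma integral_sinc_sq_div_le_concFun (F : Measure ℝ) [IsFiniteMeasure F] {h : ℝ} (hh : 0 < h) :
    ∫ x, sinc (x / h) ^ 2 ∂F ≤ 6 * (∑' k : ℤ, 1 / (1 + (k : ℝ) ^ 2)) * concFun F h := by
  have hg : Integrable (fun x => sinc (x / h) ^ 2) F :=
    .of_bound (by fun_prop) 1 (ae_of_all _ fun x => by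
      rw [norm_pow, Real.norm_eq_abs]
      exact pow_le_one₀ (abs_nonneg _) (abs_sinc_le_one _))
  have hgb (k : ℤ) (x : ℝ) (hx : x ∈ Ico (k * h) ((k + 1) * h)) :
      sinc (x / h) ^ 2 ≤ 6 * (1 / (1 + (k : ℝ) ^ 2)) := by
    rw [mul_one_div]
    exact sinc_sq_le_of_mem_Ico ⟨(le_div_iff₀ hh).mpr hx.1, (div_lt_iff₀ hh).mpr hx.2⟩
  rw [← tsum_mul_left]
  exact integral_le_tsum_mul_concFun F hh hg (summable_one_div_one_add_sq_int.mul_left 6)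
    (fun _ => by positivity) hgb

/-- Lower bound via the concentration function for nonnegative characteristic functions:
there is an absolute constant `C` such that for every probability measure `F` on ℝ with
real nonnegative characteristic function and every `h > 0`,
`h ∫_{|t|≤1/h} F̂(t) dt ≤ C Q(F,h)`. -/
theorem charFun_integral_le_concFun :
    ∃ C : ℝ, 0 < C ∧ ∀ F : Measure ℝ, IsProbabilityMeasure F →
      (∀ t : ℝ, (charF F t).im = 0 ∧ 0 ≤ (charF F t).re) →
      ∀ h : ℝ, 0 < h →
        h * ∫ t in (-(1 / h))..(1 / h), (charF F t).re ≤ C * concFun F h := by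
  refine ⟨24 * ∑' k : ℤ, 1 / (1 + (k : ℝ) ^ 2), mul_pos (by norm_num)
    (summable_one_div_one_add_sq_int.tsum_pos (fun _ => by positivity) 0 (by norm_num)), ?_⟩
  intro F _ hchar h hh
  rw [charF_eq_charFun] at hchar ⊢
  have hT : 0 < 2 / h := by positivity
  have hψ : IntervalIntegrable (fun t => (charFun F t).re) volume (-(2 / h)) (2 / h) :=
    (Complex.continuous_re.comp continuous_charFun).intervalIntegrable _ _
  calc h * ∫ t in (-(1 / h))..(1 / h), (charFun F t).re
      = h * ∫ t in (-(2 / h / 2))..(2 / h / 2), (charFun F t).re := by ring_nf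
    _ ≤ h * (2 * ∫ t in (-(2 / h))..(2 / h), (1 - |t| / (2 / h)) * (charFun F t).re) := by
        gcongr
        exact integral_le_two_mul_integral_one_sub_abs_div_mul hT (fun t => (hchar t).2) hψ
    _ = 4 * ∫ x, sinc (x / h) ^ 2 ∂F := by
        rw [integral_one_sub_abs_div_mul_re_charFun F hT, integral_const_mul]
        field_simp
        ring
    _ ≤ 4 * (6 * (∑' k : ℤ, 1 / (1 + (k : ℝ) ^ 2)) * concFun F h) := by
        gcongr
        exact integral_sinc_sq_div_le_concFun F hh
    _ = 24 * (∑' k : ℤ, 1 / (1 + (k : ℝ) ^ 2)) * concFun F h := by ring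
end
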